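/- arXiv:2603.01346 — 5 statements merged into one kernel-verified Lean document; each statement's English description precedes it below -/
import Mathlib

section
/- Let D be a distribution on a domain X and m, M ∈ ℕ with m ≤ M. Drawing m i.i.d. samples from D has the same distribution as first drawing a multiset S of M i.i.d. samples from D and then drawing m samples from S uniformly at random without replacement. -/
open scoped ENNReal

lemma tsum_pi_prod_fin {X : Type*} (D : PMF X) (n : ℕ) :
    ∑' g : Fin n → X, ∏ a, D (g a) = 1 := by
  induction n with
  | zero =>
      haveI : Unique (Fin 0 → X) := ⟨⟨Fin.elim0⟩, fun f => funext fun x => x.elim0⟩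
      rw [tsum_eq_single default (fun b hb => absurd (Unique.eq_default b) hb)]
      simp
  | succ n ih =>
      rw [← (Fin.consEquiv (fun _ : Fin (n+1) => X)).tsum_eq (fun g => ∏ a, D (g a))]
      rw [ENNReal.tsum_prod']
      have key : ∀ (x : X) (g : Fin n → X),
          (∏ a : Fin (n+1), D ((Fin.consEquiv (fun _ : Fin (n+1) => X)) (x, g) a))
            = D x * ∏ a : Fin n, D (g a) := by
        intro x g
        rw [Fin.prod_univ_succ]
        simp [Fin.consEquiv]
      simp only [key]
      simp [ENNReal.tsum_mul_left, ih, D.tsum_coe]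

lemma tsum_pi_prod {X : Type*} (D : PMF X) (α : Type*) [Fintype α] :
    ∑' g : α → X, ∏ a, D (g a) = 1 := by
  rw [← (Equiv.arrowCongr (Fintype.equivFin α).symm (Equiv.refl X)).tsum_eq
    (fun g => ∏ a, D (g a))]
  rw [← tsum_pi_prod_fin D (Fintype.card α)]
  refine tsum_congr fun h => ?_
  simp only [Equiv.arrowCongr_apply, Equiv.refl_apply, Function.comp]
  exact Equiv.prod_comp (Fintype.equivFin α) (fun b => D (h b))

lemma tsum_embed_key {X : Type*} [DecidableEq X] (D : PMF X) {m M : ℕ} (f : Fin m → X)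
    (ι : Fin m ↪ Fin M) :
    ∑' S : Fin M → X, (∏ j, D (S j)) * (if ∀ i, S (ι i) = f i then (1:ℝ≥0∞) else 0)
      = ∏ i, D (f i) := by
  classical
  set s : Finset (Fin M) := Finset.univ.map ι with hs
  have hmem : ∀ j, j ∈ s ↔ ∃ i, ι i = j := by intro j; simp [hs]
  let E : {S : Fin M → X // ∀ i, S (ι i) = f i} ≃ ({j : Fin M // j ∉ s} → X) :=
  { toFun := fun S j => S.1 j.1
    invFun := fun g => ⟨fun j =>
        if h : j ∈ s then f (((hmem j).mp h).choose) else g ⟨j, h⟩, by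
      intro i
      have h : ι i ∈ s := (hmem _).mpr ⟨i, rfl⟩
      have hc := ((hmem (ι i)).mp h).choose_spec
      have hi : ((hmem (ι i)).mp h).choose = i := ι.injective hc
      simp [h, hi]⟩
    left_inv := fun S => by
      apply Subtype.ext
      funext j
      by_cases h : j ∈ s
      · have hc := ((hmem j).mp h).choose_spec
        simp only [dif_pos h]
        exact ((S.2 _).symm).trans (congrArg S.1 hc)
      · simp [h]
    right_inv := fun g => by
      funext j
      simp [j.2] }
  have step1 : ∑' S : Fin M → X, (∏ j, D (S j)) * (if ∀ i, S (ι i) = f i then (1:ℝ≥0∞) else 0)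
      = ∑' S : {S : Fin M → X // ∀ i, S (ι i) = f i}, ∏ j, D (S.1 j) := by
    refine Eq.trans (tsum_congr fun S => ?_)
      (tsum_subtype {S : Fin M → X | ∀ i, S (ι i) = f i} (fun S => ∏ j, D (S j))).symm
    by_cases h : ∀ i, S (ι i) = f i
    · simp [Set.indicator, h]
    · simp [Set.indicator, h]
  rw [step1, ← E.symm.tsum_eq (fun S => ∏ j, D (S.1 j))]
  have step2 : ∀ g : {j : Fin M // j ∉ s} → X,
      (∏ j, D ((E.symm g).1 j)) = (∏ i, D (f i)) * ∏ j : {j : Fin M // j ∉ s}, D (g j) := by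
    intro g
    rw [← Finset.prod_mul_prod_compl s (fun j => D ((E.symm g).1 j))]
    congr 1
    · show ∏ j ∈ Finset.univ.map ι, D ((E.symm g).1 j) = _
      rw [Finset.prod_map]
      exact Finset.prod_congr rfl fun i _ => by rw [(E.symm g).2 i]
    · rw [Finset.prod_subtype (p := fun j => j ∉ s) sᶜ (fun x => by simp)
        (fun j => D ((E.symm g).1 j))]
      refine Finset.prod_congr rfl fun j _ => ?_
      exact congrArg D (dif_neg j.2)
  simp only [step2]
  rw [ENNReal.tsum_mul_left, tsum_pi_prod D, mul_one]

/-- Drawing m i.i.d. samples from D has the same distribution as first drawing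
a multiset S of M i.i.d. samples from D (M ≥ m) and then drawing m of them uniformly at
random without replacement (i.e. along a uniformly random injection Fin m ↪ Fin M).
Stated as equality of the point probabilities of the two processes on sequences. -/
theorem iid_eq_sample_then_subsample {X : Type*} [Countable X] [DecidableEq X] (D : PMF X)
    (m M : ℕ) (hmM : m ≤ M) (f : Fin m → X) :
    ∏ i : Fin m, D (f i) =
      (∑' S : Fin M → X, (∏ j : Fin M, D (S j)) *
          ((Finset.univ.filter
              (fun ι : Fin m ↪ Fin M => ∀ i : Fin m, S (ι i) = f i)).card : ℝ≥0∞)) /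
        (Fintype.card (Fin m ↪ Fin M) : ℝ≥0∞) := by
  classical
  haveI : Nonempty (Fin m ↪ Fin M) := ⟨Fin.castLEEmb hmM⟩
  have hc0 : (Fintype.card (Fin m ↪ Fin M) : ℝ≥0∞) ≠ 0 :=
    Nat.cast_ne_zero.mpr Fintype.card_ne_zero
  have hct : (Fintype.card (Fin m ↪ Fin M) : ℝ≥0∞) ≠ ∞ := ENNReal.natCast_ne_top _
  rw [ENNReal.eq_div_iff hc0 hct]
  have h1 : ∀ S : Fin M → X,
      ((Finset.univ.filter (fun ι : Fin m ↪ Fin M => ∀ i, S (ι i) = f i)).card : ℝ≥0∞)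
      = ∑ ι : Fin m ↪ Fin M, (if ∀ i, S (ι i) = f i then (1:ℝ≥0∞) else 0) := by
    intro S
    rw [Finset.card_filter]
    push_cast
    rfl
  calc (Fintype.card (Fin m ↪ Fin M) : ℝ≥0∞) * ∏ i : Fin m, D (f i)
      = ∑ ι : Fin m ↪ Fin M, ∏ i : Fin m, D (f i) := by
        rw [Finset.sum_const, nsmul_eq_mul]; simp
    _ = ∑ ι : Fin m ↪ Fin M, ∑' S : Fin M → X,
          (∏ j, D (S j)) * (if ∀ i, S (ι i) = f i then (1:ℝ≥0∞) else 0) := by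
        exact Finset.sum_congr rfl fun ι _ => (tsum_embed_key D f ι).symm
    _ = ∑' S : Fin M → X, ∑ ι : Fin m ↪ Fin M,
          (∏ j, D (S j)) * (if ∀ i, S (ι i) = f i then (1:ℝ≥0∞) else 0) := by
        exact (Summable.tsum_finsetSum fun _ _ => ENNReal.summable).symm
    _ = ∑' S : Fin M → X, (∏ j : Fin M, D (S j)) *
          ((Finset.univ.filter
              (fun ι : Fin m ↪ Fin M => ∀ i : Fin m, S (ι i) = f i)).card : ℝ≥0∞) := by
        refine tsum_congr fun S => ?_
        rw [h1, Finset.mul_sum]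
end

section
/- Let C : X* → [0,1] be a function on finite sequences, let D be a distribution on X, m ≤ M, and let Γ = M(M−1)⋯(M−m+1)/M^m. Then E_{S∼D^m}[C(S)] ≥ (1/Γ)·E_{S∼D^M}[E_{T∼(D_S)^m}[C(T)]] + 1 − 1/Γ, where D_S denotes the uniform distribution on the multiset S and T∼(D_S)^m denotes m i.i.d. draws with replacement from S. -/
open Finset
open scoped ENNReal

lemma auxP {X : Type*} [Countable X] (D : PMF X) (n : ℕ) :
    ∑' f : Fin n → X, ∏ i, D (f i) = 1 := by
  induction n with
  | zero =>
    haveI : Unique (Fin 0 → X) := ⟨⟨fun i => i.elim0⟩, fun f => funext fun i => i.elim0⟩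
    rw [tsum_eq_single default (fun b hb => absurd (Subsingleton.elim b default) hb)]
    simp
  | succ n ih =>
    rw [← Equiv.tsum_eq (Fin.consEquiv (fun _ => X))]
    have h1 : ∀ p : X × (Fin n → X),
        (∏ i, D ((Fin.consEquiv (fun _ => X)) p i)) = D p.1 * ∏ i : Fin n, D (p.2 i) := by
      rintro ⟨x, g⟩
      rw [Fin.prod_univ_succ]
      simp [Fin.consEquiv]
    rw [tsum_congr h1, ENNReal.tsum_prod (f := fun (x : X) (g : Fin n → X) => D x * ∏ i : Fin n, D (g i))]
    simp_rw [ENNReal.tsum_mul_left, ih, mul_one, D.tsum_coe]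

lemma auxKey {X : Type*} [Countable X] (D : PMF X) {m M : ℕ}
    (t : Fin m → Fin M) (ht : Function.Injective t) (f : (Fin m → X) → ℝ≥0∞) :
    ∑' S : Fin M → X, (∏ j, D (S j)) * f (S ∘ t) = ∑' s : Fin m → X, (∏ i, D (s i)) * f s := by
  classical
  have hm : m ≤ M := by
    simpa using Fintype.card_le_of_injective t ht
  have hcard : Fintype.card {j : Fin M // ¬ j ∈ Set.range t} = M - m := by
    have h1 : Fintype.card (Set.range t) = m := by
      rw [Set.card_range_of_injective ht]; simp
    have h2 : Fintype.card {j : Fin M // ¬ j ∈ Set.range t}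
        = Fintype.card (↥(Set.range t)ᶜ) := Fintype.card_congr (Equiv.subtypeEquivRight (by simp))
    rw [h2, Fintype.card_compl_set, h1, Fintype.card_fin]
  have e2 : Fin (M - m) ≃ {j : Fin M // ¬ j ∈ Set.range t} :=
    Fintype.equivOfCardEq (by rw [Fintype.card_fin, hcard])
  set σ : (Fin m ⊕ Fin (M - m)) ≃ Fin M :=
    (Equiv.sumCongr (Equiv.ofInjective t ht) e2).trans (Equiv.sumCompl (· ∈ Set.range t)) with hσdef
  have hσ : ∀ i, σ (Sum.inl i) = t i := by intro i; simp [hσdef]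
  set E : (Fin m → X) × (Fin (M - m) → X) ≃ (Fin M → X) :=
    { toFun := fun P => (Sum.elim P.1 P.2) ∘ σ.symm
      invFun := fun S => (S ∘ σ ∘ Sum.inl, S ∘ σ ∘ Sum.inr)
      left_inv := by
        rintro ⟨a, b⟩
        refine Prod.ext ?_ ?_ <;> funext i <;> simp [Function.comp]
      right_inv := by
        intro S
        funext j
        show Sum.elim (S ∘ ⇑σ ∘ Sum.inl) (S ∘ ⇑σ ∘ Sum.inr) (σ.symm j) = S j
        rcases h : σ.symm j with x | x <;>
          (simp only [Sum.elim_inl, Sum.elim_inr, Function.comp_apply];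
           rw [← h, Equiv.apply_symm_apply]) } with hEdef
  have hcomp : ∀ (a : Fin m → X) (b : Fin (M - m) → X) (x : Fin m ⊕ Fin (M - m)),
      E (a, b) (σ x) = Sum.elim a b x := by
    intro a b x; simp [hEdef]
  have h1 : ∀ P : (Fin m → X) × (Fin (M - m) → X),
      (∏ j, D (E P j)) * f (E P ∘ t) = ((∏ i, D (P.1 i)) * f P.1) * ∏ k, D (P.2 k) := by
    rintro ⟨a, b⟩
    have hat : E (a, b) ∘ t = a := by
      funext i
      have := hcomp a b (Sum.inl i)
      rw [hσ i] at this
      simpa using this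
    have hprod : ∏ j, D (E (a, b) j) = (∏ i, D (a i)) * ∏ k, D (b k) := by
      rw [← Equiv.prod_comp σ (fun j => D (E (a, b) j)), Fintype.prod_sum_type]
      simp [hcomp]
    rw [hat, hprod]; ring
  rw [← Equiv.tsum_eq E, tsum_congr h1,
    ENNReal.tsum_prod (f := fun (a : Fin m → X) (b : Fin (M - m) → X) =>
      ((∏ i, D (a i)) * f a) * ∏ k, D (b k))]
  simp_rw [ENNReal.tsum_mul_left, auxP D (M - m), mul_one]

/-- For a certifier C : Xᵐ → [0,1], a distribution D, m ≤ M, and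
Γ = M(M−1)⋯(M−m+1)/Mᵐ, we have
E_{S∼Dᵐ}[C(S)] ≥ (1/Γ)·E_{S∼D^M}[E_{T∼(D_S)ᵐ}[C(T)]] + 1 − 1/Γ,
where D_S is the uniform distribution on the multiset S (so T ∼ (D_S)ᵐ corresponds to a
uniformly random t : Fin m → Fin M composed with S). -/
theorem certifier_subsample_inequality {X : Type*} [Countable X] (D : PMF X)
    (m M : ℕ) (hm : 1 ≤ m) (hmM : m ≤ M)
    (C : (Fin m → X) → ℝ) (hC0 : ∀ s, 0 ≤ C s) (hC1 : ∀ s, C s ≤ 1) :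
    (1 / ∏ i ∈ Finset.range m, ((M : ℝ) - (i : ℝ)) / (M : ℝ)) *
        (∑' S : Fin M → X, (∏ j : Fin M, (D (S j)).toReal) *
          ((1 / (M : ℝ) ^ m) * ∑ t : Fin m → Fin M, C (S ∘ t))) +
        1 - 1 / ∏ i ∈ Finset.range m, ((M : ℝ) - (i : ℝ)) / (M : ℝ) ≤
      ∑' s : Fin m → X, (∏ i : Fin m, (D (s i)).toReal) * C s := by
  classical
  have hM : 1 ≤ M := le_trans hm hmM
  have hMR : (0:ℝ) < (M:ℝ) := by exact_mod_cast hM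
  have hMpow : (0:ℝ) < (M:ℝ)^m := by positivity
  set Γ : ℝ := ∏ i ∈ Finset.range m, ((M : ℝ) - (i : ℝ)) / (M : ℝ) with hΓdef
  have hΓpos : 0 < Γ := by
    refine Finset.prod_pos fun i hi => ?_
    have hi' : i < m := Finset.mem_range.mp hi
    have : (i:ℝ) < (M:ℝ) := by exact_mod_cast lt_of_lt_of_le hi' hmM
    apply div_pos (by linarith) hMR
  set N : ℕ := M.descFactorial m with hNdef
  have hN : (N : ℝ) = ∏ i ∈ Finset.range m, ((M:ℝ) - (i:ℝ)) := by
    rw [hNdef, Nat.descFactorial_eq_prod_range, Nat.cast_prod]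
    refine Finset.prod_congr rfl fun i hi => ?_
    have hi' : i ≤ M := le_of_lt (lt_of_lt_of_le (Finset.mem_range.mp hi) hmM)
    push_cast [Nat.cast_sub hi']
    ring
  have hΓeq : Γ = (N:ℝ) / (M:ℝ)^m := by
    rw [hΓdef, Finset.prod_div_distrib, ← hN, Finset.prod_const, Finset.card_range]
  -- ENNReal quantities
  set p : (Fin M → X) → ℝ≥0∞ := fun S => ∏ j, D (S j) with hp
  set q : (Fin m → X) → ℝ≥0∞ := fun s => ∏ i, D (s i) with hq
  set C' : (Fin m → X) → ℝ≥0∞ := fun s => ENNReal.ofReal (C s) with hC'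
  have hpt : ∀ S, p S ≠ ⊤ := fun S => ENNReal.prod_ne_top fun j _ => D.apply_ne_top _
  have hqt : ∀ s, q s ≠ ⊤ := fun s => ENNReal.prod_ne_top fun i _ => D.apply_ne_top _
  have hpsum : ∑' S, p S = 1 := auxP D M
  have hqsum : ∑' s, q s = 1 := auxP D m
  have hC'1 : ∀ s, C' s ≤ 1 := fun s => ENNReal.ofReal_le_one.mpr (hC1 s)
  set R : ℝ≥0∞ := ∑' s, q s * C' s with hR
  have hRle : R ≤ 1 := by
    rw [hR, ← hpsum]
    rw [hpsum, ← hqsum]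
    exact Summable.tsum_le_tsum (fun s => mul_le_of_le_one_right zero_le (hC'1 s))
      ENNReal.summable ENNReal.summable
  have hRt : R ≠ ⊤ := (lt_of_le_of_lt hRle ENNReal.one_lt_top).ne
  have hRHS : ∑' s : Fin m → X, (∏ i : Fin m, (D (s i)).toReal) * C s = R.toReal := by
    have h1 : ∀ s : Fin m → X, (∏ i : Fin m, (D (s i)).toReal) * C s = (q s * C' s).toReal := by
      intro s
      rw [ENNReal.toReal_mul, hC', ENNReal.toReal_ofReal (hC0 s), hq, ENNReal.toReal_prod]
    rw [tsum_congr h1, ← ENNReal.tsum_toReal_eq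
      (fun s => ENNReal.mul_ne_top (hqt s) ENNReal.ofReal_ne_top), ← hR]
  set A : (Fin m → Fin M) → ℝ≥0∞ := fun t => ∑' S, p S * C' (S ∘ t) with hA
  have hAle : ∀ t, A t ≤ 1 := by
    intro t
    rw [hA, ← hpsum]
    exact Summable.tsum_le_tsum (fun S => mul_le_of_le_one_right zero_le (hC'1 _))
      ENNReal.summable ENNReal.summable
  have hAt : ∀ t, A t ≠ ⊤ := fun t => (lt_of_le_of_lt (hAle t) ENNReal.one_lt_top).ne
  have hAinj : ∀ t : Fin m → Fin M, Function.Injective t → A t = R := by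
    intro t ht
    rw [hA, hR]
    exact auxKey D t ht C'
  have hreal : ∀ t : Fin m → Fin M,
      ∑' S : Fin M → X, (p S).toReal * C (S ∘ t) = (A t).toReal := by
    intro t
    rw [show (A t).toReal = ∑' S : Fin M → X, ((p S) * C' (S ∘ t)).toReal from
      ENNReal.tsum_toReal_eq (fun S => ENNReal.mul_ne_top (hpt S) ENNReal.ofReal_ne_top)]
    exact tsum_congr fun S => by
      rw [ENNReal.toReal_mul, hC', ENNReal.toReal_ofReal (hC0 _)]
  have hsummable : ∀ t : Fin m → Fin M,
      Summable (fun S : Fin M → X => (p S).toReal * C (S ∘ t)) := by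
    intro t
    have h1 : Summable (fun S : Fin M → X => ((p S) * C' (S ∘ t)).toReal) :=
      ENNReal.summable_toReal (hAt t)
    exact h1.congr fun S => by rw [ENNReal.toReal_mul, hC', ENNReal.toReal_ofReal (hC0 _)]
  have hLHS : ∑' S : Fin M → X, (∏ j : Fin M, (D (S j)).toReal) *
        ((1 / (M : ℝ) ^ m) * ∑ t : Fin m → Fin M, C (S ∘ t))
      = (1 / (M:ℝ)^m) * ∑ t : Fin m → Fin M, (A t).toReal := by
    have e1 : ∀ S : Fin M → X, (∏ j : Fin M, (D (S j)).toReal) *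
        ((1 / (M : ℝ) ^ m) * ∑ t : Fin m → Fin M, C (S ∘ t))
        = (1 / (M:ℝ)^m) * ∑ t : Fin m → Fin M, (p S).toReal * C (S ∘ t) := by
      intro S
      rw [show (∏ j : Fin M, (D (S j)).toReal) = (p S).toReal from (ENNReal.toReal_prod _ _).symm,
        ← Finset.mul_sum]
      ring
    rw [tsum_congr e1, tsum_mul_left, Summable.tsum_finsetSum (fun t _ => hsummable t)]
    congr 1
    exact Finset.sum_congr rfl fun t _ => hreal t
  have hcardinj : (Finset.univ.filter fun t : Fin m → Fin M => Function.Injective t).card = N := by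
    have h1 := Fintype.card_congr (Equiv.subtypeInjectiveEquivEmbedding (Fin m) (Fin M))
    rw [Fintype.card_subtype] at h1
    rw [h1, Fintype.card_embedding_eq, Fintype.card_fin, Fintype.card_fin, hNdef]
  have hNle : N ≤ M ^ m := by
    have h1 := Finset.card_filter_le (Finset.univ : Finset (Fin m → Fin M))
      (fun t => Function.Injective t)
    rw [hcardinj] at h1
    simpa [Fintype.card_fun] using h1
  have hR1 : R.toReal ≤ 1 := by
    have := ENNReal.toReal_mono (by simp) hRle
    simpa using this
  have hsumbound : ∑ t : Fin m → Fin M, (A t).toReal ≤ N * R.toReal + ((M:ℝ)^m - N) := by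
    rw [← Finset.sum_filter_add_sum_filter_not Finset.univ
      (fun t : Fin m → Fin M => Function.Injective t)]
    have h1 : ∑ t ∈ Finset.univ.filter (fun t : Fin m → Fin M => Function.Injective t),
        (A t).toReal = N * R.toReal := by
      rw [Finset.sum_congr rfl (fun t htm => by
        rw [hAinj t (Finset.mem_filter.mp htm).2]), Finset.sum_const, hcardinj, nsmul_eq_mul]
    have h2 : ∑ t ∈ Finset.univ.filter (fun t : Fin m → Fin M => ¬ Function.Injective t),
        (A t).toReal ≤ (M:ℝ)^m - N := by
      have hc : (Finset.univ.filter
          (fun t : Fin m → Fin M => ¬ Function.Injective t)).card = M ^ m - N := by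
        have := Finset.card_filter_add_card_filter_not
          (s := (Finset.univ : Finset (Fin m → Fin M)))
          (p := fun t => Function.Injective t)
        rw [hcardinj] at this
        simp only [Finset.card_univ, Fintype.card_fun, Fintype.card_fin] at this
        omega
      calc ∑ t ∈ Finset.univ.filter (fun t : Fin m → Fin M => ¬ Function.Injective t),
            (A t).toReal
          ≤ ∑ _t ∈ Finset.univ.filter (fun t : Fin m → Fin M => ¬ Function.Injective t), (1:ℝ) :=
            Finset.sum_le_sum fun t _ => by
              have := ENNReal.toReal_mono (by simp) (hAle t); simpa using this
        _ = ((M ^ m - N : ℕ) : ℝ) := by rw [Finset.sum_const, hc, nsmul_eq_mul, mul_one]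
        _ = (M:ℝ)^m - N := by push_cast [Nat.cast_sub hNle]; ring
    linarith
  rw [hLHS, hRHS]
  have key : (1 / (M:ℝ)^m) * ∑ t : Fin m → Fin M, (A t).toReal ≤ Γ * R.toReal + (1 - Γ) := by
    have h1 : (1 / (M:ℝ)^m) * ∑ t : Fin m → Fin M, (A t).toReal
        ≤ (1 / (M:ℝ)^m) * ((N:ℝ) * R.toReal + ((M:ℝ)^m - N)) := by
      apply mul_le_mul_of_nonneg_left hsumbound
      positivity
    have h2 : (1 / (M:ℝ)^m) * ((N:ℝ) * R.toReal + ((M:ℝ)^m - N)) = Γ * R.toReal + (1 - Γ) := by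
      rw [hΓeq]
      field_simp
    linarith
  have hRnn : 0 ≤ R.toReal := ENNReal.toReal_nonneg
  have h3 : (1/Γ) * (Γ * R.toReal + (1 - Γ)) = R.toReal + (1/Γ - 1) := by
    field_simp
  have h4 : (1/Γ) * ((1 / (M:ℝ)^m) * ∑ t : Fin m → Fin M, (A t).toReal)
      ≤ (1/Γ) * (Γ * R.toReal + (1 - Γ)) := by
    apply mul_le_mul_of_nonneg_left key
    positivity
  linarith
end

section
/- Fix β ∈ (0, 1/8) and let S(n) be a set system on U(n) satisfying the properties of the separated set system (sets of size n, pairwise intersections ≤ n^{1−β/2}, every small subset contained in many sets). For all sufficiently large n, there exists a hypothesis class H(n) = {h_S : S ∈ S(n)} ⊆ {0,1}^{U(n)} such that (i) h_S(x) = 1 for all x ∉ S, and (ii) for every T ⊆ U(n) with |T| ≤ 2n^{1−β} and every binary labeling b ∈ {0,1}^{|T|}, the number of S containing T with h_S restricted to T equal to b lies between (1 − n^{−β})·|S_T|/2^{|T|} and (1 + n^{−β})·|S_T|/2^{|T|}, where S_T = {S ∈ S(n) : T ⊆ S}. -/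
open Finset

private lemma exp_le_one_add_add_sq {x : ℝ} (hx : |x| ≤ 1) :
    Real.exp x ≤ 1 + x + x ^ 2 := by
  have h := Real.exp_bound hx (n := 2) (by norm_num)
  have h2 : ∑ m ∈ range 2, x ^ m / m.factorial = 1 + x := by
    simp [Finset.sum_range_succ]
  rw [h2] at h
  have h3 := (abs_sub_le_iff.1 h).1
  have h4 : |x| ^ 2 = x ^ 2 := sq_abs x
  rw [h4] at h3
  norm_num [Nat.factorial] at h3
  nlinarith [sq_nonneg x]

private lemma markov_count {Ω : Type} [Fintype Ω] (f : Ω → ℝ) (hf : ∀ g, 0 ≤ f g)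
    {c : ℝ} (s : Finset Ω) (h : ∀ g ∈ s, c ≤ f g) :
    (s.card : ℝ) * c ≤ ∑ g, f g := by
  calc (s.card : ℝ) * c = ∑ _g ∈ s, c := by rw [Finset.sum_const, nsmul_eq_mul]
    _ ≤ ∑ g ∈ s, f g := Finset.sum_le_sum h
    _ ≤ ∑ g, f g := Finset.sum_le_sum_of_subset_of_nonneg (Finset.subset_univ s)
        (fun g _ _ => hf g)

private lemma mgf_count {ι V : Type} [Fintype ι] [DecidableEq ι] [Fintype V]
    (A : Finset ι) (P : V → Prop) [DecidablePred P] (t : ℝ) :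
    ∑ g : ι → V, Real.exp (t * ((A.filter (fun i => P (g i))).card : ℝ))
      = ((Fintype.card V : ℝ)) ^ (Fintype.card ι - A.card) *
        (((Finset.univ.filter P).card : ℝ) * Real.exp t
          + ((Fintype.card V : ℝ) - ((Finset.univ.filter P).card : ℝ))) ^ A.card := by
  have step1 : ∀ g : ι → V,
      Real.exp (t * ((A.filter (fun i => P (g i))).card : ℝ))
        = ∏ i, (if i ∈ A then (if P (g i) then Real.exp t else 1) else 1) := by
    intro g
    rw [Finset.prod_ite_mem, Finset.univ_inter, Finset.card_filter]
    push_cast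
    rw [Finset.mul_sum, Real.exp_sum]
    exact Finset.prod_congr rfl (fun i _ => by by_cases h : P (g i) <;> simp [h])
  simp only [step1]
  rw [← Fintype.prod_sum (fun i v => if i ∈ A then (if P v then Real.exp t else 1) else 1)]
  have step2 : ∀ i : ι, (∑ v : V, if i ∈ A then (if P v then Real.exp t else 1) else 1)
      = if i ∈ A then (((Finset.univ.filter P).card : ℝ) * Real.exp t
          + ((Fintype.card V : ℝ) - ((Finset.univ.filter P).card : ℝ))) else (Fintype.card V : ℝ) := by
    intro i
    by_cases h : i ∈ A
    · simp only [h, if_true]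
      rw [Finset.sum_ite, Finset.sum_const, Finset.sum_const, nsmul_eq_mul, nsmul_eq_mul,
        mul_one]
      have h0 := Finset.card_filter_add_card_filter_not (s := (univ : Finset V)) P
      rw [Finset.card_univ] at h0
      have h0' := congrArg (Nat.cast : ℕ → ℝ) h0
      push_cast at h0'
      have hcard : ((univ.filter (fun v => ¬ P v)).card : ℝ)
          = (Fintype.card V : ℝ) - ((univ.filter P).card : ℝ) := by linarith
      rw [hcard]
    · simp [h, Finset.card_univ]
  rw [Finset.prod_congr rfl (fun i _ => step2 i)]
  rw [Finset.prod_ite, Finset.prod_const, Finset.prod_const]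
  have h1 : (univ.filter (fun i => i ∈ A)) = A := by simp
  have h2 : (univ.filter (fun i => i ∉ A)).card = Fintype.card ι - A.card := by
    rw [Finset.filter_not, Finset.filter_mem_eq_inter, Finset.univ_inter,
      Finset.card_sdiff_of_subset (Finset.subset_univ A), Finset.card_univ]
  rw [h1, h2]
  ring

private lemma chernoff_tail {ι V : Type} [Fintype ι] [DecidableEq ι] [Fintype V]
    (A : Finset ι) (P : V → Prop) [DecidablePred P] {ε : ℝ}
    (hε0 : 0 < ε) (hε1 : ε ≤ 1) (hV : 0 < Fintype.card V)
    (s : Finset (ι → V))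
    (hs : ∀ g ∈ s,
      ¬((1 - ε) * (A.card * (((univ.filter P).card : ℝ) / (Fintype.card V : ℝ)))
            ≤ ((A.filter (fun i => P (g i))).card : ℝ) ∧
        ((A.filter (fun i => P (g i))).card : ℝ)
            ≤ (1 + ε) * (A.card * (((univ.filter P).card : ℝ) / (Fintype.card V : ℝ))))) :
    (s.card : ℝ) ≤ 2 * (Fintype.card V : ℝ) ^ (Fintype.card ι)
        * Real.exp (-(A.card * (((univ.filter P).card : ℝ) / (Fintype.card V : ℝ)))
            * ε ^ 2 / 4) := by
  classical
  set M : ℝ := (Fintype.card V : ℝ) with hM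
  set q : ℝ := ((univ.filter P).card : ℝ) with hq
  set p : ℝ := q / M with hp
  set N : ℕ := A.card with hN
  set μ : ℝ := (N : ℝ) * p with hμ
  have hM0 : 0 < M := by rw [hM]; exact_mod_cast hV
  have hq0 : 0 ≤ q := by positivity
  have hqM : q ≤ M := by
    rw [hq, hM, ← Finset.card_univ]
    exact_mod_cast Finset.card_filter_le univ P
  have hp0 : 0 ≤ p := div_nonneg hq0 hM0.le
  have hp1 : p ≤ 1 := (div_le_one hM0).2 hqM
  have hμ0 : 0 ≤ μ := mul_nonneg (Nat.cast_nonneg N) hp0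
  have hNR : N ≤ Fintype.card ι := Finset.card_le_univ A
  set X : (ι → V) → ℝ := fun g => ((A.filter (fun i => P (g i))).card : ℝ) with hX
  have key : ∀ t a : ℝ, |t| ≤ 1 → t + t ^ 2 - t * a = -ε ^ 2 / 4 →
      ∀ u : Finset (ι → V), (∀ g ∈ u, t * (a * μ) ≤ t * X g) →
      (u.card : ℝ) ≤ M ^ Fintype.card ι * Real.exp (-μ * ε ^ 2 / 4) := by
    intro t a ht hta u hu
    have hmark : (u.card : ℝ) * Real.exp (t * (a * μ)) ≤ ∑ g : ι → V, Real.exp (t * X g) :=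
      markov_count _ (fun g => (Real.exp_pos _).le) u
        (fun g hg => Real.exp_le_exp.2 (hu g hg))
    have hmg : ∑ g : ι → V, Real.exp (t * X g)
        = M ^ (Fintype.card ι - N) * (q * Real.exp t + (M - q)) ^ N := mgf_count A P t
    have hbase : q * Real.exp t + (M - q) = M * (1 + p * (Real.exp t - 1)) := by
      rw [hp]; field_simp; ring
    have hbase0 : 0 ≤ 1 + p * (Real.exp t - 1) := by
      nlinarith [Real.exp_pos t, hp0, hp1]
    have hpow : (1 + p * (Real.exp t - 1)) ^ N ≤ Real.exp (μ * (Real.exp t - 1)) := by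
      calc (1 + p * (Real.exp t - 1)) ^ N ≤ Real.exp (p * (Real.exp t - 1)) ^ N := by
            apply pow_le_pow_left₀ hbase0
            linarith [Real.add_one_le_exp (p * (Real.exp t - 1))]
        _ = Real.exp ((N : ℝ) * (p * (Real.exp t - 1))) := by
            rw [← Real.exp_nat_mul]
        _ = Real.exp (μ * (Real.exp t - 1)) := by rw [hμ]; ring_nf
    have hexp1 : Real.exp t - 1 ≤ t + t ^ 2 := by
      linarith [exp_le_one_add_add_sq ht]
    have hsum : ∑ g : ι → V, Real.exp (t * X g)
        ≤ M ^ Fintype.card ι * Real.exp (μ * (Real.exp t - 1)) := by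
      rw [hmg, hbase, mul_pow, ← mul_assoc, pow_sub_mul_pow M hNR]
      exact mul_le_mul_of_nonneg_left hpow (by positivity)
    have hfinal : (u.card : ℝ) * Real.exp (t * (a * μ))
        ≤ M ^ Fintype.card ι * Real.exp (μ * (Real.exp t - 1)) := le_trans hmark hsum
    have hc0 : (0:ℝ) < Real.exp (t * (a * μ)) := Real.exp_pos _
    rw [← le_div_iff₀ hc0] at hfinal
    calc (u.card : ℝ) ≤ M ^ Fintype.card ι * Real.exp (μ * (Real.exp t - 1))
          / Real.exp (t * (a * μ)) := hfinal
      _ = M ^ Fintype.card ι * Real.exp (μ * (Real.exp t - 1) - t * (a * μ)) := by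
          rw [Real.exp_sub]; ring
      _ ≤ M ^ Fintype.card ι * Real.exp (-μ * ε ^ 2 / 4) := by
          apply mul_le_mul_of_nonneg_left _ (by positivity)
          apply Real.exp_le_exp.2
          have : μ * (Real.exp t - 1) - t * (a * μ) ≤ μ * (t + t ^ 2 - t * a) := by
            nlinarith [hμ0, hexp1]
          calc μ * (Real.exp t - 1) - t * (a * μ) ≤ μ * (t + t ^ 2 - t * a) := this
            _ = μ * (-ε ^ 2 / 4) := by rw [hta]
            _ = -μ * ε ^ 2 / 4 := by ring
  set sU : Finset (ι → V) := s.filter (fun g => ¬(X g ≤ (1 + ε) * μ)) with hsU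
  set sL : Finset (ι → V) := s.filter (fun g => ¬((1 - ε) * μ ≤ X g)) with hsL
  have hsubset : s ⊆ sU ∪ sL := by
    intro g hg
    rcases not_and_or.1 (hs g hg) with h | h
    · exact Finset.mem_union_right _ (Finset.mem_filter.2 ⟨hg, by
        rw [hμ, hN]; exact h⟩)
    · exact Finset.mem_union_left _ (Finset.mem_filter.2 ⟨hg, by
        rw [hμ, hN]; exact h⟩)
  have habs : |ε / 2| ≤ 1 := by rw [abs_of_nonneg (by linarith)]; linarith
  have habs' : |-(ε / 2)| ≤ 1 := by rw [abs_neg]; exact habs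
  have hU := key (ε / 2) (1 + ε) habs (by ring) sU (by
    intro g hg
    have := (Finset.mem_filter.1 hg).2
    push_neg at this
    have h2 : (1 + ε) * μ ≤ X g := this.le
    nlinarith [hε0])
  have hL := key (-(ε / 2)) (1 - ε) habs' (by ring) sL (by
    intro g hg
    have hlt := (Finset.mem_filter.1 hg).2
    push_neg at hlt
    have h2 : X g ≤ (1 - ε) * μ := hlt.le
    nlinarith [hε0])
  have hcard : (s.card : ℝ) ≤ (sU.card : ℝ) + (sL.card : ℝ) := by
    have := Finset.card_le_card hsubset
    have h2 := Finset.card_union_le sU sL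
    exact_mod_cast le_trans this h2
  linarith

private lemma eventually_ineq (β : ℝ) (hβ0 : 0 < β) (hβ1 : β < 1/8) :
    ∀ᶠ x : ℝ in Filter.atTop,
      (2 * (x ^ ((1:ℝ) + β) + 1) + 1) * Real.log 2 <
        1 / 2 * Real.exp (1 / 8 * x ^ ((1:ℝ) - β / 2)) * (2:ℝ) ^ (-(2 * x ^ ((1:ℝ) - β)))
          * (x ^ (-β)) ^ 2 / 4 := by
  have hr1 : (0:ℝ) < 1 - β / 2 := by linarith
  have hr2 : (0:ℝ) < β / 2 := by linarith
  have hA := (tendsto_rpow_atTop hr1).eventually_ge_atTop (Real.log 40 * 32)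
  have hC := (tendsto_rpow_atTop hr2).eventually_ge_atTop (Real.log 2 * 64)
  have hB0 : (0:ℝ) < 1 / (32 * (1 + 3 * β)) := by positivity
  have hB := (isLittleO_log_rpow_atTop hr1).def hB0
  filter_upwards [Filter.eventually_ge_atTop (1:ℝ), hA, hC, hB] with x hx1 hA hC hB
  have hx0 : (0:ℝ) < x := by linarith
  have hlogx0 : 0 ≤ Real.log x := Real.log_nonneg hx1
  set L : ℝ := x ^ ((1:ℝ) - β / 2) with hL
  have hL0 : 0 < L := Real.rpow_pos_of_pos hx0 _
  -- rewrite RHS as an exponential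
  have h2y : (2:ℝ) ^ (-(2 * x ^ ((1:ℝ) - β))) =
      Real.exp (-(2 * x ^ ((1:ℝ) - β)) * Real.log 2) := by
    rw [Real.rpow_def_of_pos (by norm_num : (0:ℝ) < 2)]
    ring_nf
  have hxb : (x ^ (-β)) ^ 2 = Real.exp (-(2 * β) * Real.log x) := by
    rw [Real.rpow_def_of_pos hx0, ← Real.exp_nat_mul]
    congr 1
    push_cast
    ring
  have hRHS : 1 / 2 * Real.exp (1 / 8 * L) * (2:ℝ) ^ (-(2 * x ^ ((1:ℝ) - β)))
        * (x ^ (-β)) ^ 2 / 4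
      = Real.exp (1 / 8 * L - 2 * x ^ ((1:ℝ) - β) * Real.log 2 - 2 * β * Real.log x) / 8 := by
    rw [h2y, hxb, Real.exp_sub, Real.exp_sub,
      show (-(2 * x ^ ((1:ℝ) - β)) * Real.log 2) = -(2 * x ^ ((1:ℝ) - β) * Real.log 2) by ring,
      show (-(2 * β) * Real.log x) = -(2 * β * Real.log x) by ring,
      Real.exp_neg, Real.exp_neg]
    field_simp
    ring
  rw [hRHS]
  -- bound LHS by an exponential
  have hxpow1 : (1:ℝ) ≤ x ^ ((1:ℝ) + β) := Real.one_le_rpow hx1 (by linarith)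
  have hlog2 : Real.log 2 ≤ 1 := by
    have := Real.log_le_sub_one_of_pos (by norm_num : (0:ℝ) < 2)
    linarith
  have hlog2' : 0 < Real.log 2 := Real.log_pos (by norm_num)
  have hLHS : (2 * (x ^ ((1:ℝ) + β) + 1) + 1) * Real.log 2 ≤ 5 * x ^ ((1:ℝ) + β) := by
    nlinarith [hxpow1, hlog2, hlog2']
  have hexp5 : 5 * x ^ ((1:ℝ) + β)
      = Real.exp (Real.log 5 + (1 + β) * Real.log x) := by
    rw [Real.exp_add, Real.exp_log (by norm_num : (0:ℝ) < 5), ← Real.log_rpow hx0,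
      Real.exp_log (Real.rpow_pos_of_pos hx0 _)]
  -- the three smallness facts
  have hexp40 : 40 * x ^ ((1:ℝ) + β) = Real.exp (Real.log 40 + (1 + β) * Real.log x) := by
    rw [Real.exp_add, Real.exp_log (by norm_num : (0:ℝ) < 40), ← Real.log_rpow hx0,
      Real.exp_log (Real.rpow_pos_of_pos hx0 _)]
  have fact1 : Real.log 40 ≤ L / 32 := by linarith [hA]
  have fact2 : (1 + 3 * β) * Real.log x ≤ L / 32 := by
    have h1 : ‖Real.log x‖ ≤ 1 / (32 * (1 + 3 * β)) * ‖x ^ ((1:ℝ) - β / 2)‖ := hB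
    rw [Real.norm_eq_abs, Real.norm_eq_abs, abs_of_nonneg hlogx0,
      abs_of_nonneg (Real.rpow_nonneg hx0.le _)] at h1
    have h2 : (1 + 3 * β) * Real.log x ≤ (1 + 3 * β) * (1 / (32 * (1 + 3 * β)) * L) := by
      apply mul_le_mul_of_nonneg_left _ (by linarith)
      exact h1
    have h3 : (1 + 3 * β) * (1 / (32 * (1 + 3 * β)) * L) = L / 32 := by
      field_simp
    linarith
  have fact3 : 2 * x ^ ((1:ℝ) - β) * Real.log 2 ≤ L / 32 := by
    have hsplit : x ^ ((1:ℝ) - β) * x ^ (β / 2) = L := by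
      rw [hL, ← Real.rpow_add hx0]
      congr 1
      ring
    have h1 : x ^ ((1:ℝ) - β) * (Real.log 2 * 64) ≤ x ^ ((1:ℝ) - β) * x ^ (β / 2) :=
      mul_le_mul_of_nonneg_left hC (Real.rpow_nonneg hx0.le _)
    rw [hsplit] at h1
    nlinarith [Real.rpow_nonneg hx0.le ((1:ℝ) - β)]
  have hlin : (1 + β) * Real.log x + 2 * β * Real.log x = (1 + 3 * β) * Real.log x := by ring
  have hsum : Real.log 40 + (1 + β) * Real.log x
      < 1 / 8 * L - 2 * x ^ ((1:ℝ) - β) * Real.log 2 - 2 * β * Real.log x := by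
    linarith [fact1, fact2, fact3, hL0, hlin]
  have h40 : 40 * x ^ ((1:ℝ) + β)
      < Real.exp (1 / 8 * L - 2 * x ^ ((1:ℝ) - β) * Real.log 2 - 2 * β * Real.log x) := by
    rw [hexp40]
    exact Real.exp_lt_exp.2 hsum
  linarith [hLHS, h40]

private lemma card_match {U : Type} [Fintype U] [DecidableEq U] (T : Finset U) (b : U → Bool) :
    (univ.filter (fun v : U → Bool => ∀ x ∈ T, v x = b x)).card
      = 2 ^ (Fintype.card U - T.card) := by
  rw [Finset.card_filter]
  have step : ∀ v : U → Bool, (if (∀ x ∈ T, v x = b x) then (1:ℕ) else 0)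
      = ∏ x : U, (if x ∈ T then (if v x = b x then 1 else 0) else 1) := by
    intro v
    rw [Finset.prod_ite_mem, Finset.univ_inter, Finset.prod_boole]
    congr
  simp only [step]
  rw [← Fintype.prod_sum (fun (x : U) (c : Bool) =>
    if x ∈ T then (if c = b x then (1:ℕ) else 0) else 1)]
  have step2 : ∀ x : U, (∑ c : Bool, if x ∈ T then (if c = b x then (1:ℕ) else 0) else 1)
      = if x ∈ T then 1 else 2 := by
    intro x
    by_cases h : x ∈ T <;> simp [h]
  rw [Finset.prod_congr rfl (fun x _ => step2 x), Finset.prod_ite, Finset.prod_const,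
    Finset.prod_const, one_pow, one_mul]
  congr 1
  rw [Finset.filter_not, Finset.filter_mem_eq_inter, Finset.univ_inter,
    Finset.card_sdiff_of_subset (Finset.subset_univ T), Finset.card_univ]

/-- Given a separated set system 𝒮 on a universe U of size ⌈n^{1+β}⌉ (sets of
size n, pairwise intersections ≤ n^{1−β/2}, every subset of size ≤ 2n^{1−β} contained in at
least (1/2)exp((1/8)n^{1−β/2}) sets), for all sufficiently large n there is a hypothesis
class {h_S : S ∈ 𝒮} with h_S ≡ 1 off S, such that for every small T and every labeling b of
T, the number of S ⊇ T with h_S agreeing with b on T is (1 ± n^{−β})·|𝒮_T|/2^{|T|}. -/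
theorem balanced_hypothesis_class_exists (β : ℝ) (hβ0 : 0 < β) (hβ1 : β < 1 / 8) :
    ∃ N : ℕ, ∀ n : ℕ, N ≤ n →
      ∀ (U : Type) [Fintype U] [DecidableEq U] (𝒮 : Finset (Finset U)),
        Fintype.card U = ⌈(n : ℝ) ^ ((1 : ℝ) + β)⌉₊ →
        (∀ S ∈ 𝒮, S.card = n) →
        (∀ S ∈ 𝒮, ∀ S' ∈ 𝒮, S ≠ S' →
          ((S ∩ S').card : ℝ) ≤ (n : ℝ) ^ ((1 : ℝ) - β / 2)) →
        (∀ T : Finset U, (T.card : ℝ) ≤ 2 * (n : ℝ) ^ ((1 : ℝ) - β) →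
          (1 / 2) * Real.exp ((1 / 8) * (n : ℝ) ^ ((1 : ℝ) - β / 2)) ≤
            ((𝒮.filter (fun S => T ⊆ S)).card : ℝ)) →
        ∃ h : Finset U → U → Bool,
          (∀ S ∈ 𝒮, ∀ x, x ∉ S → h S x = true) ∧
          (∀ T : Finset U, (T.card : ℝ) ≤ 2 * (n : ℝ) ^ ((1 : ℝ) - β) →
            ∀ b : U → Bool,
              (1 - (n : ℝ) ^ (-β)) * ((𝒮.filter (fun S => T ⊆ S)).card : ℝ) /
                  (2 : ℝ) ^ T.card ≤
                ((𝒮.filter (fun S => T ⊆ S ∧ ∀ x ∈ T, h S x = b x)).card : ℝ) ∧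
              ((𝒮.filter (fun S => T ⊆ S ∧ ∀ x ∈ T, h S x = b x)).card : ℝ) ≤
                (1 + (n : ℝ) ^ (-β)) * ((𝒮.filter (fun S => T ⊆ S)).card : ℝ) /
                  (2 : ℝ) ^ T.card) := by
  classical
  have hev : ∀ᶠ n : ℕ in Filter.atTop,
      ((2 * ((n:ℝ) ^ ((1:ℝ) + β) + 1) + 1) * Real.log 2 <
        1 / 2 * Real.exp (1 / 8 * (n:ℝ) ^ ((1:ℝ) - β / 2))
          * (2:ℝ) ^ (-(2 * (n:ℝ) ^ ((1:ℝ) - β))) * ((n:ℝ) ^ (-β)) ^ 2 / 4) ∧ 1 ≤ n :=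
    (tendsto_natCast_atTop_atTop.eventually (eventually_ineq β hβ0 hβ1)).and
      (Filter.eventually_ge_atTop 1)
  obtain ⟨N, hN⟩ := Filter.eventually_atTop.1 hev
  refine ⟨N, fun n hn U _ _ 𝒮 hcard hsize hinter hcover => ?_⟩
  obtain ⟨hineq, hn1⟩ := hN n hn
  have hnR : (1:ℝ) ≤ (n:ℝ) := by exact_mod_cast hn1
  have hn0 : (0:ℝ) < (n:ℝ) := by linarith
  have hε0 : 0 < (n:ℝ) ^ (-β) := Real.rpow_pos_of_pos hn0 _
  have hε1 : (n:ℝ) ^ (-β) ≤ 1 := Real.rpow_le_one_of_one_le_of_nonpos hnR (by linarith)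
  have hVcard : Fintype.card (U → Bool) = 2 ^ Fintype.card U := by
    rw [Fintype.card_fun, Fintype.card_bool]
  have hV0 : 0 < Fintype.card (U → Bool) := by rw [hVcard]; positivity
  -- the probability that a uniformly random labeling matches b on T
  have hp_eq : ∀ (T : Finset U) (b : U → Bool),
      ((univ.filter (fun v : U → Bool => ∀ x ∈ T, v x = b x)).card : ℝ)
        / (Fintype.card (U → Bool) : ℝ) = ((2:ℝ) ^ T.card)⁻¹ := by
    intro T b
    have hk : T.card ≤ Fintype.card U := Finset.card_le_univ T
    have h2k : ((2:ℝ) ^ (Fintype.card U - T.card)) * (2:ℝ) ^ T.card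
        = (2:ℝ) ^ Fintype.card U := by
      rw [← pow_add, Nat.sub_add_cancel hk]
    rw [card_match T b, hVcard]
    push_cast
    field_simp
    linear_combination h2k
  -- the per-(T,b) bad-set bound
  have hTB : ∀ (T : Finset U) (b : U → Bool), (T.card : ℝ) ≤ 2 * (n:ℝ) ^ ((1:ℝ) - β) →
      ((univ.filter (fun g : Finset U → (U → Bool) =>
        ¬((1 - (n:ℝ) ^ (-β)) * (((𝒮.filter (fun S => T ⊆ S)).card : ℝ)
              * (((univ.filter (fun v : U → Bool => ∀ x ∈ T, v x = b x)).card : ℝ)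
                / (Fintype.card (U → Bool) : ℝ)))
            ≤ (((𝒮.filter (fun S => T ⊆ S)).filter (fun S => ∀ x ∈ T, g S x = b x)).card : ℝ) ∧
          (((𝒮.filter (fun S => T ⊆ S)).filter (fun S => ∀ x ∈ T, g S x = b x)).card : ℝ)
            ≤ (1 + (n:ℝ) ^ (-β)) * (((𝒮.filter (fun S => T ⊆ S)).card : ℝ)
              * (((univ.filter (fun v : U → Bool => ∀ x ∈ T, v x = b x)).card : ℝ)
                / (Fintype.card (U → Bool) : ℝ)))))).card : ℝ)
      ≤ 2 * (Fintype.card (U → Bool) : ℝ) ^ (Fintype.card (Finset U))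
          * Real.exp (-(1 / 2 * Real.exp (1 / 8 * (n:ℝ) ^ ((1:ℝ) - β / 2))
              * (2:ℝ) ^ (-(2 * (n:ℝ) ^ ((1:ℝ) - β))) * ((n:ℝ) ^ (-β)) ^ 2 / 4)) := by
    intro T b hT
    refine le_trans (chernoff_tail (𝒮.filter (fun S => T ⊆ S))
      (fun v : U → Bool => ∀ x ∈ T, v x = b x) hε0 hε1 hV0 _
      (fun g hg => (Finset.mem_filter.1 hg).2)) ?_
    apply mul_le_mul_of_nonneg_left _ (by positivity)
    apply Real.exp_le_exp.2
    rw [hp_eq T b]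
    have hNlow : 1 / 2 * Real.exp (1 / 8 * (n:ℝ) ^ ((1:ℝ) - β / 2))
        ≤ ((𝒮.filter (fun S => T ⊆ S)).card : ℝ) := hcover T hT
    have hplow : (2:ℝ) ^ (-(2 * (n:ℝ) ^ ((1:ℝ) - β))) ≤ ((2:ℝ) ^ T.card)⁻¹ := by
      rw [Real.rpow_neg (by norm_num : (0:ℝ) ≤ 2)]
      apply inv_anti₀ (by positivity)
      rw [← Real.rpow_natCast 2 T.card]
      exact Real.rpow_le_rpow_of_exponent_le one_le_two hT
    have hmul : 1 / 2 * Real.exp (1 / 8 * (n:ℝ) ^ ((1:ℝ) - β / 2))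
          * (2:ℝ) ^ (-(2 * (n:ℝ) ^ ((1:ℝ) - β)))
        ≤ ((𝒮.filter (fun S => T ⊆ S)).card : ℝ) * ((2:ℝ) ^ T.card)⁻¹ :=
      mul_le_mul hNlow hplow (by positivity) (by positivity)
    have hmul2 := mul_le_mul_of_nonneg_right hmul (sq_nonneg ((n:ℝ) ^ (-β)))
    linarith
  -- union bound
  set Bad : Finset U → (U → Bool) → Finset (Finset U → (U → Bool)) := fun T b =>
    univ.filter (fun g : Finset U → (U → Bool) =>
        ¬((1 - (n:ℝ) ^ (-β)) * (((𝒮.filter (fun S => T ⊆ S)).card : ℝ)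
              * (((univ.filter (fun v : U → Bool => ∀ x ∈ T, v x = b x)).card : ℝ)
                / (Fintype.card (U → Bool) : ℝ)))
            ≤ (((𝒮.filter (fun S => T ⊆ S)).filter (fun S => ∀ x ∈ T, g S x = b x)).card : ℝ) ∧
          (((𝒮.filter (fun S => T ⊆ S)).filter (fun S => ∀ x ∈ T, g S x = b x)).card : ℝ)
            ≤ (1 + (n:ℝ) ^ (-β)) * (((𝒮.filter (fun S => T ⊆ S)).card : ℝ)
              * (((univ.filter (fun v : U → Bool => ∀ x ∈ T, v x = b x)).card : ℝ)
                / (Fintype.card (U → Bool) : ℝ))))) with hBadDef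
  set pairs : Finset (Finset U × (U → Bool)) :=
    (univ.filter (fun T : Finset U => (T.card : ℝ) ≤ 2 * (n:ℝ) ^ ((1:ℝ) - β))) ×ˢ univ
    with hpairsDef
  set BadAll : Finset (Finset U → (U → Bool)) := univ.filter (fun g =>
    ∃ T : Finset U, ∃ b : U → Bool,
      (T.card : ℝ) ≤ 2 * (n:ℝ) ^ ((1:ℝ) - β) ∧ g ∈ Bad T b) with hBadAllDef
  have hsub : BadAll ⊆ pairs.biUnion (fun Tb => Bad Tb.1 Tb.2) := by
    intro g hg
    obtain ⟨T, b, hc, hgTb⟩ := (Finset.mem_filter.1 hg).2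
    exact Finset.mem_biUnion.2 ⟨(T, b), Finset.mem_product.2
      ⟨Finset.mem_filter.2 ⟨Finset.mem_univ _, hc⟩, Finset.mem_univ _⟩, hgTb⟩
  have hpairscard : (pairs.card : ℝ) ≤ (2:ℝ) ^ Fintype.card U * 2 ^ Fintype.card U := by
    rw [hpairsDef, Finset.card_product]
    have h1 : (univ.filter (fun T : Finset U =>
        (T.card : ℝ) ≤ 2 * (n:ℝ) ^ ((1:ℝ) - β))).card ≤ 2 ^ Fintype.card U := by
      calc _ ≤ (univ : Finset (Finset U)).card := Finset.card_filter_le _ _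
        _ = 2 ^ Fintype.card U := by rw [Finset.card_univ, Fintype.card_finset]
    have h2 : (univ : Finset (U → Bool)).card = 2 ^ Fintype.card U := by
      rw [Finset.card_univ, hVcard]
    push_cast [h2]
    have := (Nat.cast_le (α := ℝ)).2 h1
    push_cast at this
    nlinarith [pow_pos (by norm_num : (0:ℝ) < 2) (Fintype.card U), this]
  have hcount : (BadAll.card : ℝ) ≤ (pairs.card : ℝ)
      * (2 * (Fintype.card (U → Bool) : ℝ) ^ (Fintype.card (Finset U))
          * Real.exp (-(1 / 2 * Real.exp (1 / 8 * (n:ℝ) ^ ((1:ℝ) - β / 2))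
              * (2:ℝ) ^ (-(2 * (n:ℝ) ^ ((1:ℝ) - β))) * ((n:ℝ) ^ (-β)) ^ 2 / 4))) := by
    calc (BadAll.card : ℝ) ≤ ((pairs.biUnion (fun Tb => Bad Tb.1 Tb.2)).card : ℝ) := by
          exact_mod_cast Finset.card_le_card hsub
      _ ≤ ((∑ Tb ∈ pairs, (Bad Tb.1 Tb.2).card : ℕ) : ℝ) := by
          exact_mod_cast Finset.card_biUnion_le
      _ = ∑ Tb ∈ pairs, ((Bad Tb.1 Tb.2).card : ℝ) := by push_cast; rfl
      _ ≤ ∑ _Tb ∈ pairs, (2 * (Fintype.card (U → Bool) : ℝ) ^ (Fintype.card (Finset U))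
          * Real.exp (-(1 / 2 * Real.exp (1 / 8 * (n:ℝ) ^ ((1:ℝ) - β / 2))
              * (2:ℝ) ^ (-(2 * (n:ℝ) ^ ((1:ℝ) - β))) * ((n:ℝ) ^ (-β)) ^ 2 / 4))) := by
          apply Finset.sum_le_sum
          intro Tb hTb
          have hcond := (Finset.mem_filter.1 (Finset.mem_product.1 hTb).1).2
          exact hTB Tb.1 Tb.2 hcond
      _ = (pairs.card : ℝ) * _ := by rw [Finset.sum_const, nsmul_eq_mul]
  have hΩcard : (Fintype.card (Finset U → (U → Bool)) : ℝ)
      = (Fintype.card (U → Bool) : ℝ) ^ (Fintype.card (Finset U)) := by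
    rw [Fintype.card_fun]
    push_cast
    rfl
  -- numeric step
  have hceil : (Fintype.card U : ℝ) ≤ (n:ℝ) ^ ((1:ℝ) + β) + 1 := by
    rw [hcard]
    exact le_of_lt (Nat.ceil_lt_add_one (by positivity))
  have hc₀pos : (2 * (Fintype.card U : ℝ) + 1) * Real.log 2
      < 1 / 2 * Real.exp (1 / 8 * (n:ℝ) ^ ((1:ℝ) - β / 2))
          * (2:ℝ) ^ (-(2 * (n:ℝ) ^ ((1:ℝ) - β))) * ((n:ℝ) ^ (-β)) ^ 2 / 4 := by
    have hlog2 : 0 < Real.log 2 := Real.log_pos (by norm_num)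
    nlinarith [hineq, hceil, hlog2]
  have hsmall : (2:ℝ) ^ Fintype.card U * 2 ^ Fintype.card U * 2
      * Real.exp (-(1 / 2 * Real.exp (1 / 8 * (n:ℝ) ^ ((1:ℝ) - β / 2))
          * (2:ℝ) ^ (-(2 * (n:ℝ) ^ ((1:ℝ) - β))) * ((n:ℝ) ^ (-β)) ^ 2 / 4)) < 1 := by
    have hpow : (2:ℝ) ^ Fintype.card U * 2 ^ Fintype.card U * 2
        = 2 ^ (2 * Fintype.card U + 1) := by
      rw [pow_add, two_mul, pow_add, pow_one]
    rw [hpow, ← Real.exp_log (pow_pos (by norm_num : (0:ℝ) < 2) (2 * Fintype.card U + 1)),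
      Real.log_pow, ← Real.exp_add]
    have : ((2 * Fintype.card U + 1 : ℕ) : ℝ) * Real.log 2
        + -(1 / 2 * Real.exp (1 / 8 * (n:ℝ) ^ ((1:ℝ) - β / 2))
          * (2:ℝ) ^ (-(2 * (n:ℝ) ^ ((1:ℝ) - β))) * ((n:ℝ) ^ (-β)) ^ 2 / 4) < 0 := by
      push_cast
      linarith [hc₀pos]
    calc Real.exp _ < Real.exp 0 := Real.exp_lt_exp.2 this
      _ = 1 := Real.exp_zero
  have hlt : (BadAll.card : ℝ) < (Fintype.card (Finset U → (U → Bool)) : ℝ) := by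
    have hMrpos : (0:ℝ) < (Fintype.card (U → Bool) : ℝ) ^ (Fintype.card (Finset U)) := by
      positivity
    have hexp0 : (0:ℝ) < Real.exp (-(1 / 2 * Real.exp (1 / 8 * (n:ℝ) ^ ((1:ℝ) - β / 2))
          * (2:ℝ) ^ (-(2 * (n:ℝ) ^ ((1:ℝ) - β))) * ((n:ℝ) ^ (-β)) ^ 2 / 4)) := Real.exp_pos _
    rw [hΩcard]
    calc (BadAll.card : ℝ) ≤ _ := hcount
      _ ≤ ((2:ℝ) ^ Fintype.card U * 2 ^ Fintype.card U)
            * (2 * (Fintype.card (U → Bool) : ℝ) ^ (Fintype.card (Finset U))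
              * Real.exp (-(1 / 2 * Real.exp (1 / 8 * (n:ℝ) ^ ((1:ℝ) - β / 2))
                * (2:ℝ) ^ (-(2 * (n:ℝ) ^ ((1:ℝ) - β))) * ((n:ℝ) ^ (-β)) ^ 2 / 4))) := by
          apply mul_le_mul_of_nonneg_right hpairscard
          positivity
      _ = (Fintype.card (U → Bool) : ℝ) ^ (Fintype.card (Finset U))
            * ((2:ℝ) ^ Fintype.card U * 2 ^ Fintype.card U * 2
              * Real.exp (-(1 / 2 * Real.exp (1 / 8 * (n:ℝ) ^ ((1:ℝ) - β / 2))
                * (2:ℝ) ^ (-(2 * (n:ℝ) ^ ((1:ℝ) - β))) * ((n:ℝ) ^ (-β)) ^ 2 / 4))) := by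
          ring
      _ < (Fintype.card (U → Bool) : ℝ) ^ (Fintype.card (Finset U)) * 1 := by
          exact mul_lt_mul_of_pos_left hsmall hMrpos
      _ = (Fintype.card (U → Bool) : ℝ) ^ (Fintype.card (Finset U)) := mul_one _
  have hlt' : BadAll.card < Fintype.card (Finset U → (U → Bool)) := by exact_mod_cast hlt
  obtain ⟨g, hg⟩ : ∃ g : Finset U → (U → Bool), g ∉ BadAll := by
    by_contra hcon
    push_neg at hcon
    have heq : BadAll = univ := Finset.eq_univ_iff_forall.2 hcon
    rw [heq, Finset.card_univ] at hlt'
    exact lt_irrefl _ hlt'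
  -- define the hypothesis class
  refine ⟨fun S x => if x ∈ S then g S x else true, ?_, ?_⟩
  · intro S hS x hx
    simp [hx]
  · intro T hT b
    have hnotin : g ∉ Bad T b := fun hmem =>
      hg (Finset.mem_filter.2 ⟨Finset.mem_univ _, ⟨T, b, hT, hmem⟩⟩)
    have hbounds := not_not.1 (fun hnb => hnotin (Finset.mem_filter.2
      ⟨Finset.mem_univ _, hnb⟩))
    obtain ⟨hlow, hhigh⟩ := hbounds
    rw [hp_eq T b] at hlow hhigh
    have hfe : (𝒮.filter (fun S => T ⊆ S)).filter (fun S => ∀ x ∈ T, g S x = b x)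
        = 𝒮.filter (fun S => T ⊆ S ∧ ∀ x ∈ T,
            (fun S x => if x ∈ S then g S x else true) S x = b x) := by
      rw [Finset.filter_filter]
      apply Finset.filter_congr
      intro S _
      simp only
      constructor
      · rintro ⟨hTS, hall⟩
        refine ⟨hTS, fun x hx => ?_⟩
        rw [if_pos (hTS hx)]
        exact hall x hx
      · rintro ⟨hTS, hall⟩
        refine ⟨hTS, fun x hx => ?_⟩
        have := hall x hx
        rwa [if_pos (hTS hx)] at this
    rw [← hfe]
    constructor
    · have heq : (1 - (n:ℝ) ^ (-β)) * ((𝒮.filter (fun S => T ⊆ S)).card : ℝ)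
          / (2:ℝ) ^ T.card
          = (1 - (n:ℝ) ^ (-β)) * (((𝒮.filter (fun S => T ⊆ S)).card : ℝ)
              * ((2:ℝ) ^ T.card)⁻¹) := by ring
      rw [heq]
      exact hlow
    · have heq : (1 + (n:ℝ) ^ (-β)) * ((𝒮.filter (fun S => T ⊆ S)).card : ℝ)
          / (2:ℝ) ^ T.card
          = (1 + (n:ℝ) ^ (-β)) * (((𝒮.filter (fun S => T ⊆ S)).card : ℝ)
              * ((2:ℝ) ^ T.card)⁻¹) := by ring
      rw [heq]
      exact hhigh
end

section
/- Let H ⊆ {0,1}^X, let D be a distribution on X, and let S be a multiset of n points each in the support of D such that S is shattered by H. Then for the one-inclusion-graph learner (which minimizes worst-case transductive/leave-one-out error on each unlabeled dataset), the worst-case transductive error on S is at least (⌊n/2⌋)/n ≥ 1/2 − 1/(2n); in particular, if every size-m+1 multiset from the support of D is shattered by H, then the expected error of the OIG learner with m training samples is at least roughly 1/2. -/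
open Finset

lemma eraseIdx_ofFn_congr {α : Type*} {n : ℕ} (f g : Fin n → α) (i : Fin n)
    (h : ∀ j, j ≠ i → f j = g j) :
    (List.ofFn f).eraseIdx (i : ℕ) = (List.ofFn g).eraseIdx (i : ℕ) := by
  apply List.ext_getElem
  · simp [List.length_eraseIdx]
  · intro k h1 h2
    rw [List.getElem_eraseIdx, List.getElem_eraseIdx]
    simp only [List.length_eraseIdx, List.length_ofFn] at h1
    split <;> rename_i hk
    · rw [List.getElem_ofFn, List.getElem_ofFn]
      exact h _ (by simp only [ne_eq, Fin.ext_iff]; omega)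
    · rw [List.getElem_ofFn, List.getElem_ofFn]
      exact h _ (by simp only [ne_eq, Fin.ext_iff]; push_neg at hk; omega)

/-- If a dataset s of n points is shattered by H, then for every learner A
(hence in particular for the one-inclusion-graph learner, which minimizes worst-case
transductive error) there is a target h ∈ H forcing transductive (leave-one-out) error at
least ⌊n/2⌋/n ≥ 1/2 − 1/(2n). -/
theorem shattered_transductive_lower_bound {X : Type*} (H : Set (X → Bool))
    (n : ℕ) (hn : 0 < n) (s : Fin n → X)
    (hshatter : ∀ b : Fin n → Bool, ∃ h ∈ H, ∀ i, h (s i) = b i)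
    (A : List (X × Bool) → X → Bool) :
    ∃ h ∈ H,
      ((1 : ℝ) / 2 - 1 / (2 * (n : ℝ)) ≤
        (1 / (n : ℝ)) * ∑ i : Fin n,
          (if A ((List.ofFn (fun j => (s j, h (s j)))).eraseIdx (i : ℕ)) (s i) ≠ h (s i)
            then (1 : ℝ) else 0)) ∧
      ((n / 2 : ℕ) : ℝ) / (n : ℝ) ≤
        (1 / (n : ℝ)) * ∑ i : Fin n,
          (if A ((List.ofFn (fun j => (s j, h (s j)))).eraseIdx (i : ℕ)) (s i) ≠ h (s i)
            then (1 : ℝ) else 0) := by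
  set err : (Fin n → Bool) → ℝ := fun b => ∑ i : Fin n,
      (if A ((List.ofFn (fun j => (s j, b j))).eraseIdx (i : ℕ)) (s i) ≠ b i
        then (1 : ℝ) else 0) with herr
  -- total sum over all labelings
  have hkey : ∀ (i : Fin n),
      ∑ b : Fin n → Bool,
        (if A ((List.ofFn (fun j => (s j, b j))).eraseIdx (i : ℕ)) (s i) ≠ b i
          then (1 : ℝ) else 0) = 2 ^ (n - 1) := by
    intro i
    set f : (Fin n → Bool) → ℝ := fun b =>
      if A ((List.ofFn (fun j => (s j, b j))).eraseIdx (i : ℕ)) (s i) ≠ b i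
        then (1 : ℝ) else 0 with hf
    set σ : (Fin n → Bool) → (Fin n → Bool) := fun b => Function.update b i (!b i) with hσ
    have hσσ : ∀ b, σ (σ b) = b := by
      intro b; funext j
      by_cases hj : j = i
      · subst hj; simp [hσ]
      · simp [hσ, Function.update_of_ne hj]
    have hlist : ∀ b, (List.ofFn (fun j => (s j, (σ b) j))).eraseIdx (i : ℕ)
        = (List.ofFn (fun j => (s j, b j))).eraseIdx (i : ℕ) := by
      intro b
      apply eraseIdx_ofFn_congr
      intro j hj
      simp [hσ, Function.update_of_ne hj]
    have hsum : ∑ b : Fin n → Bool, f (σ b) = ∑ b : Fin n → Bool, f b := by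
      apply Fintype.sum_bijective σ
      · exact Function.bijective_iff_has_inverse.mpr ⟨σ, hσσ, hσσ⟩
      · intro b; rfl
    have hpair : ∀ b, f b + f (σ b) = 1 := by
      intro b
      simp only [hf, hlist]
      have : (σ b) i = !(b i) := by simp [hσ]
      rw [this]
      cases hA : A ((List.ofFn (fun j => (s j, b j))).eraseIdx (i : ℕ)) (s i) <;>
        cases hb : b i <;> simp
    have h2 : ∑ b : Fin n → Bool, (f b + f (σ b)) = 2 ^ n := by
      simp only [hpair]
      simp [Finset.card_univ]
    rw [Finset.sum_add_distrib, hsum] at h2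
    have : (2:ℝ) * ∑ b : Fin n → Bool, f b = 2 ^ n := by linarith
    have hn1 : (2:ℝ) ^ n = 2 * 2 ^ (n-1) := by
      rw [← pow_succ']
      congr 1
      omega
    rw [hn1] at this
    linarith
  have htotal : ∑ b : Fin n → Bool, err b = n * 2 ^ (n - 1) := by
    simp only [herr]
    rw [Finset.sum_comm, Finset.sum_congr rfl (fun i _ => hkey i)]
    simp [Finset.card_univ, mul_comm]
  -- exists b with err b ≥ n/2
  have hex : ∃ b : Fin n → Bool, (n : ℝ) / 2 ≤ err b := by
    by_contra hcon
    push_neg at hcon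
    have : ∑ b : Fin n → Bool, err b < ∑ b : Fin n → Bool, (n : ℝ) / 2 :=
      Finset.sum_lt_sum_of_nonempty (by simp [Finset.univ_nonempty]) (fun b _ => hcon b)
    rw [htotal] at this
    have hcard : ∑ b : Fin n → Bool, (n : ℝ) / 2 = 2 ^ n * ((n:ℝ)/2) := by
      simp [Finset.card_univ]
    rw [hcard] at this
    have hn1 : (2:ℝ) ^ n = 2 * 2 ^ (n-1) := by
      rw [← pow_succ']; congr 1; omega
    rw [hn1] at this
    nlinarith [pow_pos (by norm_num : (0:ℝ) < 2) (n-1)]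
  obtain ⟨b, hb⟩ := hex
  obtain ⟨h, hH, hhb⟩ := hshatter b
  refine ⟨h, hH, ?_⟩
  have heq : ∑ i : Fin n,
      (if A ((List.ofFn (fun j => (s j, h (s j)))).eraseIdx (i : ℕ)) (s i) ≠ h (s i)
        then (1 : ℝ) else 0) = err b := by
    simp only [herr]
    apply Finset.sum_congr rfl
    intro i _
    have : (fun j => (s j, h (s j))) = fun j => (s j, b j) := by
      funext j; rw [hhb]
    rw [this, hhb]
  rw [heq]
  have hnpos : (0:ℝ) < n := by exact_mod_cast hn
  constructor
  · have h1 : (1:ℝ)/2 - 1/(2*n) ≤ 1/2 := by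
      have : 0 < 1/(2*(n:ℝ)) := by positivity
      linarith
    calc (1:ℝ)/2 - 1/(2*n) ≤ 1/2 := h1
      _ ≤ (1/(n:ℝ)) * err b := by
        have e : (1:ℝ)/n * err b = err b / n := by ring
        rw [e, le_div_iff₀ hnpos]
        linarith
  · have hfl : ((n/2 : ℕ) : ℝ) ≤ (n:ℝ)/2 := by
      have := Nat.div_mul_le_self n 2
      have h2 : ((n/2 : ℕ) : ℝ) * 2 ≤ (n:ℝ) := by exact_mod_cast this
      linarith
    rw [div_le_iff₀ hnpos, one_div, inv_mul_eq_div, div_mul_eq_mul_div, le_div_iff₀ hnpos]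
    calc ((n/2:ℕ):ℝ) * n ≤ (n:ℝ)/2 * n := by nlinarith
      _ ≤ err b * n := by nlinarith
end

section
/- Fix β ∈ (0,1/8), let M(n) = ⌈n^{1−β}⌉, ξ(n) = M(n)/n, and let H(n) on X_n = {n}×[n] consist of all labelings that are 0 outside row n and have exactly M(n) minority-labeled points within row n (either label may be the minority). Let D(n) be the uniform distribution on X_n. Then for all sufficiently large n and all sample sizes m with ln(2/ξ(n))/(2(1/2 − ξ(n))²) ≤ m < M(n): (i) the majority learner satisfies ε_{Maj}(D(n), m) ≤ 2ξ(n); and (ii) ERM with adversarial tie-breaking satisfies ε_{ERM}(D(n), m) ≥ 1 − 2ξ(n). -/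
open Finset

namespace RowClass

/-- The hypothesis class on Fin n of labelings with exactly M minority-labeled points
(either label may be the minority). -/
def Hcl (n M : ℕ) : Set (Fin n → Bool) :=
  {h | (Finset.univ.filter (fun x => h x = false)).card = M ∨
       (Finset.univ.filter (fun x => h x = true)).card = M}

/-- The constant prediction of the majority learner on a labeled sample (ties toward 1). -/
def majLabel {n : ℕ} (m : ℕ) (h : Fin n → Bool) (t : Fin m → Fin n) : Bool :=
  decide (m ≤ 2 * (Finset.univ.filter (fun i => h (t i) = true)).card)

/-- Expected error of the majority learner under the uniform distribution on Fin n with m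
i.i.d. samples labeled by h. -/
noncomputable def majErr (n m : ℕ) (h : Fin n → Bool) : ℝ :=
  (1 / (n : ℝ) ^ m) * ∑ t : Fin m → Fin n,
    ((Finset.univ.filter (fun x => h x ≠ majLabel m h t)).card : ℝ) / (n : ℝ)

lemma choose_le_two_pow' (m k : ℕ) (hk : k ≤ m) : m.choose k ≤ 2 ^ m := by
  calc m.choose k ≤ ∑ j ∈ range (m+1), m.choose j :=
        Finset.single_le_sum (f := fun j => m.choose j) (fun _ _ => Nat.zero_le _)
          (Finset.mem_range.2 (Nat.lt_succ_of_le hk))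
    _ = 2 ^ m := Nat.sum_range_choose m


lemma hit_card_le {n m : ℕ} (S : Finset (Fin n)) (k : ℕ) :
    (univ.filter (fun t : Fin m → Fin n => k ≤ (univ.filter fun i => t i ∈ S).card)).card
      ≤ m.choose k * (S.card ^ k * n ^ (m - k)) := by
  classical
  have hsub : (univ.filter (fun t : Fin m → Fin n => k ≤ (univ.filter fun i => t i ∈ S).card))
      ⊆ (Finset.powersetCard k (univ : Finset (Fin m))).biUnion
          (fun K => Fintype.piFinset (fun i => if i ∈ K then S else univ)) := by
    intro t ht
    simp only [mem_filter, mem_univ, true_and] at ht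
    obtain ⟨K, hKsub, hKcard⟩ := Finset.exists_subset_card_eq ht
    refine mem_biUnion.2 ⟨K, Finset.mem_powersetCard_univ.2 hKcard, ?_⟩
    refine Fintype.mem_piFinset.2 fun i => ?_
    by_cases hi : i ∈ K
    · simp only [hi, if_true]
      exact (mem_filter.1 (hKsub hi)).2
    · simp [hi]
  calc _ ≤ _ := Finset.card_le_card hsub
    _ ≤ ∑ K ∈ Finset.powersetCard k (univ : Finset (Fin m)),
          (Fintype.piFinset (fun i => if i ∈ K then S else univ)).card :=
        Finset.card_biUnion_le
    _ = ∑ K ∈ Finset.powersetCard k (univ : Finset (Fin m)), S.card ^ k * n ^ (m - k) := by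
        refine Finset.sum_congr rfl fun K hK => ?_
        have hKcard : K.card = k := Finset.mem_powersetCard_univ.1 hK
        rw [Fintype.card_piFinset]
        have : ∀ i : Fin m, (if i ∈ K then S else univ).card = if i ∈ K then S.card else n := by
          intro i; split_ifs <;> simp
        rw [Finset.prod_congr rfl fun i _ => this i, Finset.prod_ite, Finset.prod_const,
          Finset.prod_const, Finset.filter_univ_mem, hKcard]
        congr 2
        have := Finset.card_filter_add_card_filter_not
          (s := (univ : Finset (Fin m))) (p := fun i => i ∈ K)
        simp only [Finset.filter_univ_mem, card_univ, Fintype.card_fin] at this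
        omega
    _ = m.choose k * (S.card ^ k * n ^ (m - k)) := by
        rw [Finset.sum_const, smul_eq_mul, Finset.card_powersetCard, card_univ, Fintype.card_fin]

lemma four_xi_pow_le (ξ : ℝ) (hξ0 : 0 < ξ) (hξ : ξ ≤ 1/32) (k : ℕ)
    (hk : Real.log (2/ξ) ≤ k) : (4*ξ)^k ≤ ξ := by
  have h4 : (0:ℝ) < 4*ξ := by linarith
  have hlog2 : Real.log 2 < 0.6931471808 := Real.log_two_lt_d9
  have hlog2' : (0:ℝ) < Real.log 2 := Real.log_pos (by norm_num)
  have hu : (3:ℝ) ≤ Real.log (1/ξ) := by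
    rw [Real.le_log_iff_exp_le (by positivity)]
    have h1 : Real.exp 3 = (Real.exp 1)^3 := by
      rw [← Real.exp_nat_mul]; norm_num
    have h2 : Real.exp 1 < 2.7182818286 := Real.exp_one_lt_d9
    have h3 : (32:ℝ) ≤ 1/ξ := by
      rw [le_div_iff₀ hξ0]; linarith
    have h4e : Real.exp 3 ≤ 32 := by
      rw [h1]
      have := pow_lt_pow_left₀ h2 (le_of_lt (Real.exp_pos 1)) (n := 3) (by norm_num)
      nlinarith [this]
    linarith
  have hlogxi : Real.log ξ = - Real.log (1/ξ) := by
    rw [one_div, Real.log_inv]; ring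
  -- reduce to log inequality
  have key : (k:ℝ) * Real.log (4*ξ) ≤ Real.log ξ := by
    have hlog4xi : Real.log (4*ξ) = Real.log 4 + Real.log ξ :=
      Real.log_mul (by norm_num) (ne_of_gt hξ0)
    have hlog4 : Real.log 4 = 2 * Real.log 2 := by
      rw [show (4:ℝ) = 2^2 by norm_num, Real.log_pow]; push_cast; ring
    have hk' : Real.log 2 + Real.log (1/ξ) ≤ k := by
      have : Real.log (2/ξ) = Real.log 2 + Real.log (1/ξ) := by
        rw [div_eq_mul_one_div 2 ξ, Real.log_mul (by norm_num) (by positivity)]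
      linarith [hk, this ▸ hk]
    set u := Real.log (1/ξ) with hudef
    rw [hlog4xi, hlog4, hlogxi]
    have hku : u ≤ k := by linarith
    nlinarith [hku, hu, hlog2, hlog2']
  calc (4*ξ)^k = Real.exp ((k:ℝ) * Real.log (4*ξ)) := by
        rw [Real.exp_nat_mul, Real.exp_log h4]
    _ ≤ Real.exp (Real.log ξ) := Real.exp_le_exp.2 key
    _ = ξ := Real.exp_log hξ0

lemma erm_exists {n m M : ℕ} (h2M : 2*M ≤ n) (hmM : m < M)
    (t : Fin m → Fin n) (b : Bool) (h₀ : Fin n → Bool)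
    (hS : (univ.filter fun x => h₀ x = b).card = M) :
    ∃ g : Fin n → Bool, (univ.filter fun x => g x = !b).card = M ∧
      (∀ i, g (t i) = h₀ (t i)) ∧
      n ≤ (univ.filter fun x => g x ≠ h₀ x).card + 2*m := by
  classical
  set S : Finset (Fin n) := univ.filter fun x => h₀ x = b with hSdef
  set T : Finset (Fin n) := Finset.image t univ with hTdef
  have htc : T.card ≤ m := le_trans (Finset.card_image_le) (by simp)
  set a := (T ∩ S).card with hadef
  have haT : a ≤ T.card := Finset.card_le_card inter_subset_left
  have haM : a ≤ M := hS ▸ Finset.card_le_card inter_subset_right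
  have hST : (S \ T).card + (T ∩ S).card = M := by
    rw [inter_comm]; rw [← hS]; exact Finset.card_sdiff_add_card_inter S T
  have hSc : Sᶜ.card = n - M := by
    rw [Finset.card_compl, hS, Fintype.card_fin]
  have hScT : (Sᶜ \ T).card + (T ∩ Sᶜ).card = n - M := by
    rw [inter_comm, ← hSc]; exact Finset.card_sdiff_add_card_inter Sᶜ T
  have hTsplit : (T ∩ S).card + (T ∩ Sᶜ).card = T.card := by
    have h1 : T ∩ Sᶜ = T \ S := by ext x; simp
    rw [h1]; exact Finset.card_inter_add_card_sdiff T S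
  -- membership helpers
  have hmemS : ∀ x, x ∈ S ↔ h₀ x = b := by intro x; simp [hSdef]
  by_cases hcase : 2*a ≤ T.card
  · -- case 1 : add E ⊆ S \ T of size T.card - 2a
    obtain ⟨E, hE, hEcard⟩ := Finset.exists_subset_card_eq
      (s := S \ T) (n := T.card - 2*a) (by omega)
    set G : Finset (Fin n) := (T ∩ S) ∪ (Sᶜ \ T) ∪ E with hGdef
    refine ⟨fun x => if x ∈ G then b else !b, ?_, ?_, ?_⟩
    · -- card
      have hd1 : Disjoint (T ∩ S) (Sᶜ \ T) := by
        rw [Finset.disjoint_left]; intro x hx hx'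
        simp only [mem_inter, mem_sdiff, mem_compl] at hx hx'; tauto
      have hd2 : Disjoint ((T ∩ S) ∪ (Sᶜ \ T)) E := by
        rw [Finset.disjoint_left]; intro x hx hx'
        have := hE hx'
        simp only [mem_union, mem_inter, mem_sdiff, mem_compl] at hx this; tauto
      have hGcard : G.card = n - M := by
        rw [hGdef, Finset.card_union_of_disjoint hd2, Finset.card_union_of_disjoint hd1]
        omega
      have : (univ.filter fun x => (if x ∈ G then b else !b) = !b) = Gᶜ := by
        ext x
        by_cases hx : x ∈ G <;> simp [hx]
      rw [this, Finset.card_compl, hGcard, Fintype.card_fin]; omega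
    · intro i
      have hiT : t i ∈ T := Finset.mem_image_of_mem t (mem_univ i)
      by_cases hb : h₀ (t i) = b
      · have : t i ∈ G := by
          rw [hGdef]; exact mem_union_left _ (mem_union_left _ (by
            simp [hTdef, hSdef, hb, hiT]))
        simp [this, hb]
      · have hnb : h₀ (t i) = !b := by
          cases hbv : h₀ (t i) <;> cases b <;> simp_all
        have : t i ∉ G := by
          rw [hGdef]
          simp only [mem_union, mem_inter, mem_sdiff, mem_compl, not_or]
          refine ⟨⟨?_, ?_⟩, ?_⟩
          · intro hx; exact hb ((hmemS _).1 hx.2)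
          · intro hx; exact hx.2 hiT
          · intro hx; exact hb ((hmemS _).1 (mem_sdiff.1 (hE hx)).1)
        simp [this, hnb]
    · -- disagreement
      show n ≤ (univ.filter fun x => (if x ∈ G then b else !b) ≠ h₀ x).card + 2*m
      have hsub : ((S \ T) \ E) ∪ (Sᶜ \ T) ⊆
          univ.filter fun x => (if x ∈ G then b else !b) ≠ h₀ x := by
        intro x hx
        rcases mem_union.1 hx with hx1 | hx2
        · obtain ⟨hxST, hxE⟩ := mem_sdiff.1 hx1
          obtain ⟨hxS, hxT⟩ := mem_sdiff.1 hxST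
          have hxG : x ∉ G := by
            rw [hGdef]
            simp only [mem_union, mem_inter, mem_sdiff, mem_compl, not_or]
            exact ⟨⟨fun h => hxT h.1, fun h => h.1 hxS⟩, hxE⟩
          have hb : h₀ x = b := (hmemS _).1 hxS
          simp only [mem_filter, mem_univ, true_and, if_neg hxG, hb]
          exact Bool.not_ne_self b
        · have hxG : x ∈ G := by
            rw [hGdef]; exact mem_union_left _ (mem_union_right _ hx2)
          obtain ⟨hxS, hxT⟩ := mem_sdiff.1 hx2
          have hb : h₀ x ≠ b := fun h => (mem_compl.1 hxS) ((hmemS _).2 h)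
          simp [hxG]
          exact fun h => hb h.symm
      have hdisj : Disjoint ((S \ T) \ E) (Sᶜ \ T) := by
        rw [Finset.disjoint_left]; intro x hx hx'
        simp only [mem_sdiff, mem_compl] at hx hx'; tauto
      have hcard := Finset.card_le_card hsub
      rw [Finset.card_union_of_disjoint hdisj, Finset.card_sdiff_of_subset hE] at hcard
      omega
  · -- case 2 : remove E ⊆ Sᶜ \ T of size 2a - T.card
    obtain ⟨E, hE, hEcard⟩ := Finset.exists_subset_card_eq
      (s := Sᶜ \ T) (n := 2*a - T.card) (by omega)
    set G : Finset (Fin n) := (T ∩ S) ∪ ((Sᶜ \ T) \ E) with hGdef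
    refine ⟨fun x => if x ∈ G then b else !b, ?_, ?_, ?_⟩
    · have hd1 : Disjoint (T ∩ S) ((Sᶜ \ T) \ E) := by
        rw [Finset.disjoint_left]; intro x hx hx'
        simp only [mem_inter, mem_sdiff, mem_compl] at hx hx'; tauto
      have hGcard : G.card = n - M := by
        rw [hGdef, Finset.card_union_of_disjoint hd1, Finset.card_sdiff_of_subset hE]
        omega
      have : (univ.filter fun x => (if x ∈ G then b else !b) = !b) = Gᶜ := by
        ext x
        by_cases hx : x ∈ G <;> simp [hx]
      rw [this, Finset.card_compl, hGcard, Fintype.card_fin]; omega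
    · intro i
      have hiT : t i ∈ T := Finset.mem_image_of_mem t (mem_univ i)
      by_cases hb : h₀ (t i) = b
      · have : t i ∈ G := by
          rw [hGdef]; exact mem_union_left _ (by simp [hTdef, hSdef, hb, hiT])
        simp [this, hb]
      · have hnb : h₀ (t i) = !b := by
          cases hbv : h₀ (t i) <;> cases b <;> simp_all
        have : t i ∉ G := by
          rw [hGdef]
          simp only [mem_union, mem_inter, mem_sdiff, mem_compl, not_or]
          constructor
          · intro hx; exact hb ((hmemS _).1 hx.2)
          · intro hx; exact hx.1.2 hiT
        simp [this, hnb]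
    · show n ≤ (univ.filter fun x => (if x ∈ G then b else !b) ≠ h₀ x).card + 2*m
      have hsub : (S \ T) ∪ ((Sᶜ \ T) \ E) ⊆
          univ.filter fun x => (if x ∈ G then b else !b) ≠ h₀ x := by
        intro x hx
        rcases mem_union.1 hx with hx1 | hx2
        · obtain ⟨hxS, hxT⟩ := mem_sdiff.1 hx1
          have hxG : x ∉ G := by
            rw [hGdef]
            simp only [mem_union, mem_inter, mem_sdiff, mem_compl, not_or]
            exact ⟨fun h => hxT h.1, fun h => h.1.1 hxS⟩
          have hb : h₀ x = b := (hmemS _).1 hxS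
          simp only [mem_filter, mem_univ, true_and, if_neg hxG, hb]
          exact Bool.not_ne_self b
        · have hxG : x ∈ G := by rw [hGdef]; exact mem_union_right _ hx2
          obtain ⟨hxS, hxT⟩ := mem_sdiff.1 (mem_sdiff.1 hx2).1
          have hb : h₀ x ≠ b := fun h => (mem_compl.1 hxS) ((hmemS _).2 h)
          simp [hxG]
          exact fun h => hb h.symm
      have hdisj : Disjoint (S \ T) ((Sᶜ \ T) \ E) := by
        rw [Finset.disjoint_left]; intro x hx hx'
        simp only [mem_sdiff, mem_compl] at hx hx'; tauto
      have hcard := Finset.card_le_card hsub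
      rw [Finset.card_union_of_disjoint hdisj, Finset.card_sdiff_of_subset hE] at hcard
      omega

lemma eventually_small (β : ℝ) (hβ0 : 0 < β) :
    ∃ N : ℕ, ∀ n : ℕ, N ≤ n → 64 ≤ n ∧ 32 * ⌈(n : ℝ) ^ ((1 : ℝ) - β)⌉₊ ≤ n := by
  have h1 : Filter.Tendsto (fun n : ℕ => (n : ℝ) ^ β) Filter.atTop Filter.atTop :=
    (tendsto_rpow_atTop hβ0).comp tendsto_natCast_atTop_atTop
  have h2 : ∀ᶠ n : ℕ in Filter.atTop, (64:ℝ) ≤ (n : ℝ) ^ β :=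
    h1.eventually_ge_atTop 64
  have h3 : ∀ᶠ n : ℕ in Filter.atTop, 64 ≤ n := Filter.eventually_ge_atTop 64
  obtain ⟨N, hN⟩ := Filter.eventually_atTop.1 (h2.and h3)
  refine ⟨N, fun n hn => ?_⟩
  obtain ⟨hpow, hn64⟩ := hN n hn
  refine ⟨hn64, ?_⟩
  have hn0 : (0:ℝ) < n := by positivity
  have hrw : (n : ℝ) ^ ((1 : ℝ) - β) = n / (n:ℝ)^β := by
    rw [Real.rpow_sub hn0, Real.rpow_one]
  have hpow0 : (0:ℝ) < (n:ℝ)^β := by positivity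
  have hle : (n : ℝ) ^ ((1 : ℝ) - β) ≤ n / 64 := by
    rw [hrw]
    apply div_le_div_of_nonneg_left (le_of_lt hn0) (by norm_num) hpow |>.trans_eq rfl
  have hceil : (⌈(n : ℝ) ^ ((1 : ℝ) - β)⌉₊ : ℝ) < (n : ℝ) ^ ((1 : ℝ) - β) + 1 :=
    Nat.ceil_lt_add_one (by positivity)
  have h64 : (64:ℝ) ≤ n := by exact_mod_cast hn64
  have : (32 * ⌈(n : ℝ) ^ ((1 : ℝ) - β)⌉₊ : ℝ) < n := by
    push_cast
    nlinarith [hceil, hle, h64]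
  exact_mod_cast this.le

lemma majErr_le {n m M : ℕ} (hM1 : 1 ≤ M) (h32 : 32*M ≤ n) (hm1 : 1 ≤ m)
    (b : Bool) (h : Fin n → Bool)
    (hS : (univ.filter fun x => h x = b).card = M)
    (hlog : Real.log (2/((M:ℝ)/n)) ≤ ((m+1)/2 : ℕ)) :
    majErr n m h ≤ 2*((M:ℝ)/n) := by
  classical
  have hn0 : 0 < n := by omega
  have hn0' : (0:ℝ) < n := by exact_mod_cast hn0
  set ξ : ℝ := (M:ℝ)/n with hξdef
  have hξ0 : 0 < ξ := by positivity
  have hξ32 : ξ ≤ 1/32 := by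
    rw [hξdef, div_le_iff₀ hn0']
    push_cast
    have : (32*M : ℕ) ≤ (n:ℕ) := h32
    have := (Nat.cast_le (α := ℝ)).2 this
    push_cast at this; linarith
  set k : ℕ := (m+1)/2 with hkdef
  have hkm : k ≤ m := by omega
  set S : Finset (Fin n) := univ.filter fun x => h x = b with hSdef
  set bad : Finset (Fin m → Fin n) := univ.filter fun t => majLabel m h t = b with hbaddef
  -- bad ⊆ hit
  have hmemS : ∀ x, x ∈ S ↔ h x = b := by intro x; simp [hSdef]
  have hbadsub : bad ⊆ univ.filter (fun t : Fin m → Fin n =>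
      k ≤ (univ.filter fun i => t i ∈ S).card) := by
    intro t ht
    rw [hbaddef, mem_filter] at ht
    rw [mem_filter]
    refine ⟨mem_univ _, ?_⟩
    have hcnt : (univ.filter fun i => h (t i) = true).card +
        (univ.filter fun i => h (t i) = false).card = m := by
      have := Finset.card_filter_add_card_filter_not
        (s := (univ : Finset (Fin m))) (p := fun i => h (t i) = true)
      simp only [card_univ, Fintype.card_fin] at this
      have heq : (univ.filter fun i => h (t i) = false)
          = (univ.filter fun a => ¬ h (t a) = true) := by
        apply Finset.filter_congr; intro i _; simp
      rw [heq]; exact this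
    cases b with
    | true =>
      have hml : m ≤ 2 * (univ.filter fun i => h (t i) = true).card := by
        have := ht.2
        simpa [majLabel] using this
      have heq : (univ.filter fun i => t i ∈ S) = (univ.filter fun i => h (t i) = true) := by
        apply Finset.filter_congr; intro i _; simp [hmemS]
      rw [heq]; omega
    | false =>
      have hml : ¬ (m ≤ 2 * (univ.filter fun i => h (t i) = true).card) := by
        have := ht.2
        simpa [majLabel] using this
      have heq : (univ.filter fun i => t i ∈ S) = (univ.filter fun i => h (t i) = false) := by
        apply Finset.filter_congr; intro i _; simp [hmemS]
      rw [heq]; omega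
  have hbadcard : bad.card ≤ m.choose k * (M ^ k * n ^ (m - k)) :=
    le_trans (Finset.card_le_card hbadsub) (by have := hit_card_le (m := m) S k; rw [hS] at this; exact this)
  -- value of disag
  have hdisag : ∀ t : Fin m → Fin n,
      ((univ.filter fun x => h x ≠ majLabel m h t).card : ℝ) / n
        ≤ if majLabel m h t = b then 1 else ξ := by
    intro t
    by_cases hc : majLabel m h t = b
    · rw [if_pos hc]
      rw [div_le_one hn0']
      have : (univ.filter fun x => h x ≠ majLabel m h t).card ≤ n := by
        have := Finset.card_filter_le (univ : Finset (Fin n)) (fun x => h x ≠ majLabel m h t)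
        simpa using this
      exact_mod_cast this
    · rw [if_neg hc]
      have hc' : majLabel m h t = !b := by
        cases hbv : majLabel m h t <;> cases b <;> simp_all
      have : (univ.filter fun x => h x ≠ majLabel m h t) = S := by
        ext x
        rw [hmemS]
        simp only [mem_filter, mem_univ, true_and, hc']
        cases hx : h x <;> cases b <;> simp
      rw [this, hS]
  -- sum bound
  have hsum : ∑ t : Fin m → Fin n,
      ((univ.filter fun x => h x ≠ majLabel m h t).card : ℝ) / n
        ≤ bad.card + (n:ℝ)^m * ξ := by
    calc ∑ t : Fin m → Fin n, ((univ.filter fun x => h x ≠ majLabel m h t).card : ℝ) / n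
        ≤ ∑ t : Fin m → Fin n, (if majLabel m h t = b then (1:ℝ) else ξ) :=
          Finset.sum_le_sum fun t _ => hdisag t
      _ = bad.card * 1 + (univ.filter fun t : Fin m → Fin n => ¬(majLabel m h t = b)).card * ξ := by
          rw [Finset.sum_ite, Finset.sum_const, Finset.sum_const, hbaddef]
          push_cast; ring
      _ ≤ bad.card + (n:ℝ)^m * ξ := by
          have hle : ((univ.filter fun t : Fin m → Fin n => ¬(majLabel m h t = b)).card : ℝ)
              ≤ (n:ℝ)^m := by
            have h1 : (univ.filter fun t : Fin m → Fin n => ¬(majLabel m h t = b)).card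
                ≤ n^m := by
              have := Finset.card_filter_le (univ : Finset (Fin m → Fin n))
                (fun t => ¬(majLabel m h t = b))
              simpa [Finset.card_univ] using this
            exact_mod_cast h1
          nlinarith [hle, hξ0]
  -- bad card real bound
  have hbadreal : (bad.card : ℝ) / (n:ℝ)^m ≤ ξ := by
    have h1 : (bad.card : ℝ) ≤ (m.choose k : ℝ) * ((M:ℝ) ^ k * (n:ℝ) ^ (m - k)) := by
      exact_mod_cast hbadcard
    have hnm : (n:ℝ)^m = (n:ℝ)^k * (n:ℝ)^(m-k) := by
      rw [← pow_add]; congr 1; omega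
    have h2 : (bad.card : ℝ) / (n:ℝ)^m ≤ (m.choose k : ℝ) * ξ^k := by
      rw [div_le_iff₀ (by positivity)]
      calc (bad.card : ℝ) ≤ (m.choose k : ℝ) * ((M:ℝ) ^ k * (n:ℝ) ^ (m - k)) := h1
        _ = (m.choose k : ℝ) * ξ^k * (n:ℝ)^m := by
            rw [hnm, hξdef, div_pow]
            field_simp
    have h3 : (m.choose k : ℝ) ≤ (4:ℝ)^k := by
      have : m.choose k ≤ 2^m := choose_le_two_pow' m k hkm
      have h2m : (2:ℕ)^m ≤ 4^k := by
        have : (4:ℕ)^k = 2^(2*k) := by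
          rw [pow_mul]; norm_num
        rw [this]
        exact Nat.pow_le_pow_right (by norm_num) (by omega)
      exact_mod_cast le_trans this h2m
    have h4 : (m.choose k : ℝ) * ξ^k ≤ (4*ξ)^k := by
      rw [mul_pow]
      exact mul_le_mul_of_nonneg_right h3 (by positivity)
    have h5 : (4*ξ)^k ≤ ξ := four_xi_pow_le ξ hξ0 hξ32 k hlog
    linarith
  -- final
  rw [majErr]
  have hnm0 : (0:ℝ) < (n:ℝ)^m := by positivity
  calc (1 / (n : ℝ) ^ m) * ∑ t : Fin m → Fin n,
      ((Finset.univ.filter (fun x => h x ≠ majLabel m h t)).card : ℝ) / (n : ℝ)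
      ≤ (1 / (n : ℝ) ^ m) * (bad.card + (n:ℝ)^m * ξ) := by
        apply mul_le_mul_of_nonneg_left hsum (by positivity)
    _ = (bad.card : ℝ) / (n:ℝ)^m + ξ := by field_simp
    _ ≤ ξ + ξ := by linarith [hbadreal]
    _ = 2*ξ := by ring


/-- With M(n) = ⌈n^{1−β}⌉, ξ(n) = M(n)/n, for all sufficiently large n and
all sample sizes m with ln(2/ξ)/(2(1/2−ξ)²) ≤ m < M(n): (i) the majority learner has error
at most 2ξ(n) for every target in the class, and (ii) some ERM rule with adversarial
tie-breaking is consistent yet has error at least 1 − 2ξ(n) on every target. -/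
theorem majority_vs_erm (β : ℝ) (hβ0 : 0 < β) (hβ1 : β < 1 / 8) :
    ∃ N : ℕ, ∀ n : ℕ, N ≤ n → ∀ m : ℕ,
      Real.log (2 / ((⌈(n : ℝ) ^ ((1 : ℝ) - β)⌉₊ : ℝ) / (n : ℝ))) /
          (2 * (1 / 2 - (⌈(n : ℝ) ^ ((1 : ℝ) - β)⌉₊ : ℝ) / (n : ℝ)) ^ 2) ≤ (m : ℝ) →
      m < ⌈(n : ℝ) ^ ((1 : ℝ) - β)⌉₊ →
      (∀ h ∈ Hcl n ⌈(n : ℝ) ^ ((1 : ℝ) - β)⌉₊,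
          majErr n m h ≤ 2 * ((⌈(n : ℝ) ^ ((1 : ℝ) - β)⌉₊ : ℝ) / (n : ℝ))) ∧
      (∃ A : (Fin m → Fin n) → (Fin n → Bool) → (Fin n → Bool),
        ∀ (t : Fin m → Fin n), ∀ h₀ ∈ Hcl n ⌈(n : ℝ) ^ ((1 : ℝ) - β)⌉₊,
          A t h₀ ∈ Hcl n ⌈(n : ℝ) ^ ((1 : ℝ) - β)⌉₊ ∧
          (∀ i, A t h₀ (t i) = h₀ (t i)) ∧
          1 - 2 * ((⌈(n : ℝ) ^ ((1 : ℝ) - β)⌉₊ : ℝ) / (n : ℝ)) ≤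
            ((Finset.univ.filter (fun x => A t h₀ x ≠ h₀ x)).card : ℝ) / (n : ℝ)) := by
  classical
  obtain ⟨N, hN⟩ := eventually_small β hβ0
  refine ⟨N, fun n hn m hlogm hmM => ?_⟩
  obtain ⟨hn64, h32⟩ := hN n hn
  set M : ℕ := ⌈(n : ℝ) ^ ((1 : ℝ) - β)⌉₊ with hMdef
  have hn0 : 0 < n := by omega
  have hn0' : (0:ℝ) < n := by exact_mod_cast hn0
  have hM1 : 1 ≤ M := by
    rw [hMdef]
    exact Nat.one_le_ceil_iff.2 (Real.rpow_pos_of_pos hn0' _)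
  have h2M : 2*M ≤ n := by omega
  set ξ : ℝ := (M:ℝ)/n with hξdef
  have hξ0 : 0 < ξ := by positivity
  have hξ32 : ξ ≤ 1/32 := by
    rw [hξdef, div_le_iff₀ hn0']
    have := (Nat.cast_le (α := ℝ)).2 h32
    push_cast at this; linarith
  have hden : (0:ℝ) < 2*(1/2 - ξ)^2 := by nlinarith
  have hlog1 : Real.log (2/ξ) ≤ m * (2*(1/2-ξ)^2) := (div_le_iff₀ hden).1 hlogm
  have hsq : 2*(1/2-ξ)^2 ≤ 1/2 := by nlinarith
  have hlogpos : 0 < Real.log (2/ξ) := by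
    apply Real.log_pos
    rw [lt_div_iff₀ hξ0]; linarith
  have hm1 : 1 ≤ m := by
    rcases Nat.eq_zero_or_pos m with h0 | h0
    · exfalso; rw [h0] at hlog1; push_cast at hlog1; nlinarith
    · exact h0
  have hmhalf : Real.log (2/ξ) ≤ (((m+1)/2 : ℕ) : ℝ) := by
    have h2k : (m:ℝ) ≤ 2*(((m+1)/2 : ℕ):ℝ) := by exact_mod_cast (by omega : m ≤ 2*((m+1)/2))
    have hm0 : (0:ℝ) ≤ m := Nat.cast_nonneg m
    nlinarith
  constructor
  · -- part (i)
    intro h hmem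
    rcases hmem with hc | hc
    · exact majErr_le hM1 h32 hm1 false h hc hmhalf
    · exact majErr_le hM1 h32 hm1 true h hc hmhalf
  · -- part (ii)
    have key : ∀ (t : Fin m → Fin n) (h₀ : Fin n → Bool), ∃ g : Fin n → Bool,
        h₀ ∈ Hcl n M → (g ∈ Hcl n M ∧ (∀ i, g (t i) = h₀ (t i)) ∧
          n ≤ (univ.filter fun x => g x ≠ h₀ x).card + 2*m) := by
      intro t h₀
      by_cases hmem : h₀ ∈ Hcl n M
      · rcases hmem with hc | hc
        · obtain ⟨g, hg1, hg2, hg3⟩ := erm_exists h2M hmM t false h₀ hc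
          refine ⟨g, fun _ => ⟨Or.inr ?_, hg2, hg3⟩⟩
          simpa using hg1
        · obtain ⟨g, hg1, hg2, hg3⟩ := erm_exists h2M hmM t true h₀ hc
          refine ⟨g, fun _ => ⟨Or.inl ?_, hg2, hg3⟩⟩
          simpa using hg1
      · exact ⟨h₀, fun h => absurd h hmem⟩
    refine ⟨fun t h₀ => (key t h₀).choose, fun t h₀ hmem => ?_⟩
    obtain ⟨hg1, hg2, hg3⟩ := (key t h₀).choose_spec hmem
    refine ⟨hg1, hg2, ?_⟩
    have hcast : (n:ℝ) ≤ ((univ.filter fun x =>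
        (key t h₀).choose x ≠ h₀ x).card : ℝ) + 2*m := by exact_mod_cast hg3
    have hm : (m:ℝ) ≤ M := by exact_mod_cast (le_of_lt hmM)
    rw [le_div_iff₀ hn0']
    have hxin : ξ * n = M := by
      rw [hξdef]; field_simp
    have hlhs : (1 - 2*ξ)*n = n - 2*M := by linear_combination (-2:ℝ)*hxin
    have hgoal : (1 - 2*ξ)*n ≤ ((univ.filter fun x =>
        (key t h₀).choose x ≠ h₀ x).card : ℝ) := by
      rw [hlhs]; linarith
    exact hgoal

end RowClass
end
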